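/- arXiv:2407.05883 — 6 statements merged into one kernel-verified Lean document; each statement's English description precedes it below -/
import Mathlib

section
/- Let k be a positive integer and let G be a cubic graph (every vertex has degree exactly 3). If G has at least 7k-1 vertices, then G has no set X of at most k vertices such that G - X is a forest. -/
open SimpleGraph Walk Finset

lemma forest_edge_bound {W : Type} [Fintype W] [DecidableEq W]
    (H : SimpleGraph W) [DecidableRel H.Adj] [Nonempty W] (hac : H.IsAcyclic) :
    H.edgeFinset.card + 1 ≤ Fintype.card W := by
  classical
  set root : W → W := fun w => (H.connectedComponentMk w).out with hrootdef
  have hmk : ∀ w : W, H.connectedComponentMk (root w) = H.connectedComponentMk w := by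
    intro w
    exact (H.connectedComponentMk w).out_eq
  have hreach : ∀ w, H.Reachable w (root w) := fun w =>
    (SimpleGraph.ConnectedComponent.exact (hmk w)).symm
  have hrootadj : ∀ {x y : W}, H.Adj x y → root x = root y := by
    intro x y h
    simp only [hrootdef]
    rw [SimpleGraph.ConnectedComponent.sound h.reachable]
  have hrootroot : ∀ w, root (root w) = root w := by
    intro w
    simp only [hrootdef]
    rw [hmk w]
  have hEU : ∀ w, ∃! p : H.Walk w (root w), p.IsPath := by
    intro w
    obtain ⟨p⟩ := hreach w
    exact ⟨p.toPath.1, p.toPath.2, fun q hq =>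
      congrArg Subtype.val (hac.path_unique ⟨q, hq⟩ p.toPath)⟩
  choose f hf hf' using hEU
  set g : W → Sym2 W := fun w =>
    if h : (f w).Nil then s(w, w) else ((f w).firstDart h).edge with hgdef
  -- key claim
  have key : ∀ x y : W, H.Adj x y → (f x).length ≤ (f y).length →
      y ≠ root y ∧ g y = s(x, y) := by
    intro x y h hlen
    have hxy : x ≠ y := h.ne
    have hroots : root x = root y := hrootadj h
    have hyr : y ≠ root y := by
      intro hy
      have hfy : (f y).length = 0 := by
        rw [← hf' y ((Walk.nil : H.Walk y y).copy rfl hy) (by simp)]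
        simp
      have hfx : (f x).length = 1 := by
        rw [← hf' x ((Walk.cons h Walk.nil).copy rfl (by rw [hroots, ← hy]))
          (by simp [hxy])]
        simp
      omega
    refine ⟨hyr, ?_⟩
    have hysupp : y ∉ (f x).support := by
      intro hy'
      have htake : (f x).takeUntil y hy' = Walk.cons h Walk.nil := by
        exact congrArg Subtype.val (hac.path_unique
          ⟨(f x).takeUntil y hy', (hf x).takeUntil hy'⟩
          ⟨Walk.cons h Walk.nil, by simp [hxy]⟩)
      have hdrop : ((f x).dropUntil y hy').copy rfl hroots = f y :=
        hf' y _ (by simp only [isPath_copy]; exact (hf x).dropUntil hy')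
      have hspec := congrArg Walk.length ((f x).take_spec hy')
      rw [length_append, htake] at hspec
      have : ((f x).dropUntil y hy').length = (f y).length := by
        rw [← hdrop, length_copy]
      simp [this] at hspec
      omega
    have hcons : (Walk.cons h.symm (f x)).copy rfl hroots = f y := by
      refine hf' y _ ?_
      simp only [isPath_copy, cons_isPath_iff]
      exact ⟨hf x, hysupp⟩
    have hny : ¬ (f y).Nil := not_nil_of_ne hyr
    have hg1 : (f y).getVert 1 = x := by
      rw [← hcons, getVert_copy, getVert_cons_succ, getVert_zero]
    rw [hgdef]
    simp only [hny, dif_neg, not_false_iff]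
    rw [edge_firstDart, show (f y).snd = x from hg1, Sym2.eq_swap]
  -- surjectivity
  have hsurj : ∀ e ∈ H.edgeFinset, ∃ w ∈ Finset.univ.filter (fun w => w ≠ root w),
      g w = e := by
    intro e he
    induction e with
    | h x y =>
      rw [mem_edgeFinset, SimpleGraph.mem_edgeSet] at he
      rcases le_total ((f x).length) ((f y).length) with hle | hle
      · obtain ⟨h1, h2⟩ := key x y he hle
        exact ⟨y, by simp [h1], h2⟩
      · obtain ⟨h1, h2⟩ := key y x he.symm hle
        exact ⟨x, by simp [h1], by rw [h2, Sym2.eq_swap]⟩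
  have hcard1 : H.edgeFinset.card ≤ (Finset.univ.filter (fun w => w ≠ root w)).card := by
    apply Finset.card_le_card_of_surjOn g
    intro e he
    obtain ⟨w, hw, hgw⟩ := hsurj e (by simpa using he)
    exact ⟨w, by simpa using hw, hgw⟩
  have hcard2 : (Finset.univ.filter (fun w => w ≠ root w)).card ≤ Fintype.card W - 1 := by
    obtain ⟨w0⟩ := (inferInstance : Nonempty W)
    have : Finset.univ.filter (fun w => w ≠ root w) ⊆ Finset.univ.erase (root w0) := by
      intro w hw
      rw [Finset.mem_filter] at hw
      rw [Finset.mem_erase]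
      refine ⟨?_, Finset.mem_univ _⟩
      intro hww
      exact hw.2 (by rw [hww, hrootroot])
    calc (Finset.univ.filter (fun w => w ≠ root w)).card
        ≤ (Finset.univ.erase (root w0)).card := Finset.card_le_card this
      _ = Fintype.card W - 1 := by rw [Finset.card_erase_of_mem (Finset.mem_univ _), Finset.card_univ]
  have : 1 ≤ Fintype.card W := Fintype.card_pos
  omega

/-- Let `k` be a positive integer and `G` a cubic graph (every vertex has degree exactly 3).
If `G` has at least `7k-1` vertices, then there is no set `X` of at most `k` vertices
such that `G - X` is a forest. -/
theorem stmt_0 {V : Type} [Fintype V] [DecidableEq V] (G : SimpleGraph V)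
    [DecidableRel G.Adj] (k : ℕ) (hk : 1 ≤ k)
    (hcubic : ∀ v : V, G.degree v = 3)
    (hcard : 7 * k - 1 ≤ Fintype.card V) :
    ¬ ∃ X : Finset V, X.card ≤ k ∧ (G.induce ((↑X : Set V)ᶜ)).IsAcyclic := by
  classical
  rintro ⟨X, hXk, hforest⟩
  set s : Set V := (↑X : Set V)ᶜ with hs
  haveI : Fintype ↥s := Fintype.ofFinite _
  have hcards : Fintype.card ↥s = Fintype.card V - X.card := by
    simp [hs, Fintype.card_compl_set]
    rw [Set.ncard_compl, Set.ncard_coe_finset, Nat.card_eq_fintype_card]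
  have hn6 : 6 ≤ Fintype.card V := by omega
  have hxn : X.card < Fintype.card V := by omega
  haveI : Nonempty ↥s := by
    rw [← Fintype.card_pos_iff, hcards]
    omega
  set H := G.induce s with hH
  haveI : DecidableRel H.Adj := fun a b => Classical.dec _
  have h2 : H.edgeFinset.card + 1 ≤ Fintype.card V - X.card := by
    rw [← hcards]
    exact forest_edge_bound H hforest
  -- degree sum
  have h1 : 3 * Fintype.card V = 2 * G.edgeFinset.card := by
    rw [← G.sum_degrees_eq_twice_card_edges]
    simp [hcubic, Finset.sum_const, mul_comm]
  -- edge split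
  set T := G.edgeFinset.filter (fun e => ∃ v ∈ X, v ∈ e) with hT
  set S := G.edgeFinset.filter (fun e => ¬ ∃ v ∈ X, v ∈ e) with hS
  have hsplit : T.card + S.card = G.edgeFinset.card := by
    rw [hT, hS]
    exact Finset.card_filter_add_card_filter_not _
  have hTle : T.card ≤ 3 * X.card := by
    have hsub : T ⊆ X.biUnion (fun v => G.incidenceFinset v) := by
      intro e he
      rw [hT, Finset.mem_filter] at he
      obtain ⟨v, hv, hve⟩ := he.2
      rw [Finset.mem_biUnion]
      refine ⟨v, hv, ?_⟩
      rw [G.mem_incidenceFinset]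
      exact ⟨mem_edgeFinset.1 he.1, hve⟩
    calc T.card ≤ (X.biUnion (fun v => G.incidenceFinset v)).card := Finset.card_le_card hsub
      _ ≤ ∑ v ∈ X, (G.incidenceFinset v).card := Finset.card_biUnion_le
      _ = 3 * X.card := by
          simp [card_incidenceFinset_eq_degree, hcubic, Finset.sum_const, mul_comm]
  have hSle : S.card ≤ H.edgeFinset.card := by
    apply Finset.card_le_card_of_surjOn (Sym2.map (Subtype.val : ↥s → V))
    intro e he
    simp only [Finset.coe_filter, Set.mem_setOf_eq, hS, Finset.mem_coe] at he
    obtain ⟨he1, he2⟩ := he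
    induction e with
    | h a b =>
      have hadj : G.Adj a b := by rwa [mem_edgeFinset, SimpleGraph.mem_edgeSet] at he1
      have ha : a ∈ s := by
        simp only [hs, Set.mem_compl_iff, Finset.mem_coe]
        intro hax
        exact he2 ⟨a, hax, Sym2.mem_mk_left a b⟩
      have hb : b ∈ s := by
        simp only [hs, Set.mem_compl_iff, Finset.mem_coe]
        intro hbx
        exact he2 ⟨b, hbx, Sym2.mem_mk_right a b⟩
      refine ⟨s(⟨a, ha⟩, ⟨b, hb⟩), ?_, ?_⟩
      · rw [Finset.mem_coe, mem_edgeFinset, SimpleGraph.mem_edgeSet]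
        exact hadj
      · rfl
  omega
end

section
/- Let G be a graph whose shortest cycle C has length at least 8d+5 for a positive integer d. Then G has no C-path of length at most 4d+2, i.e., no path of length between 1 and 4d+2 whose two endpoints lie on C, whose internal vertices avoid C, and which uses no edge of C. -/
open SimpleGraph Walk

private lemma mem_tail_of_mem_support_closed {V : Type} {G : SimpleGraph V} {u v : V}
    {w : G.Walk u u} (hw : ¬ w.Nil) (hv : v ∈ w.support) : v ∈ w.support.tail := by
  cases w with
  | nil => simp at hw
  | cons h q =>
    simp only [Walk.support_cons, List.tail_cons, List.mem_cons] at hv ⊢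
    rcases hv with rfl | hv
    · exact q.end_mem_support
    · exact hv

/-- Let `C` be a shortest cycle of `G`, of length at least `8d+5` (for `d ≥ 1`).
Then `G` has no `C`-path of length at most `4d+2`, i.e. no path of length between `1`
and `4d+2` whose two endpoints lie on `C`, whose internal vertices avoid `C`, and which
uses no edge of `C`. -/
theorem stmt_3 {V : Type} (G : SimpleGraph V) (d : ℕ) (hd : 1 ≤ d)
    {x : V} (c : G.Walk x x) (hc : c.IsCycle)
    (hshort : ∀ (y : V) (c' : G.Walk y y), c'.IsCycle → c.length ≤ c'.length)
    (hlen : 8 * d + 5 ≤ c.length) :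
    ¬ ∃ (a b : V) (p : G.Walk a b), p.IsPath ∧ 1 ≤ p.length ∧ p.length ≤ 4 * d + 2 ∧
        a ∈ c.support ∧ b ∈ c.support ∧
        (∀ v ∈ p.support, v ≠ a → v ≠ b → v ∉ c.support) ∧
        (∀ e ∈ p.edges, e ∉ c.edges) := by
  classical
  rintro ⟨a, b, p, hp, hp1, hp2, ha, hb, hint, hedge⟩
  -- a ≠ b
  have hab : a ≠ b := by
    rintro rfl
    have : (⟨p, hp⟩ : G.Path a a) = SimpleGraph.Path.nil := SimpleGraph.Path.loop_eq _
    have hpn : p = Walk.nil := congrArg Subtype.val this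
    rw [hpn] at hp1
    simp at hp1
  -- rotate c at a
  set c' : G.Walk a a := c.rotate a ha with hc'def
  have hc' : c'.IsCycle := hc.rotate ha
  have hcnil : ¬ c.Nil := hc.not_nil
  -- membership transfer between c and c'
  have htails : c'.support.tail ~r c.support.tail := support_rotate c a ha
  have hsub : ∀ v ∈ c'.support, v ∈ c.support := by
    intro v hv
    rw [c'.support_eq_cons, List.mem_cons] at hv
    rcases hv with rfl | hv
    · exact ha
    · rw [htails.perm.mem_iff] at hv
      rw [c.support_eq_cons]
      exact List.mem_cons_of_mem _ hv
  have hb' : b ∈ c'.support := by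
    have hbt : b ∈ c.support.tail := mem_tail_of_mem_support_closed hcnil hb
    rw [c'.support_eq_cons]
    exact List.mem_cons_of_mem _ (htails.perm.mem_iff.mpr hbt)
  -- split c' at b
  set q1 : G.Walk a b := c'.takeUntil b hb' with hq1def
  set q2 : G.Walk b a := c'.dropUntil b hb' with hq2def
  have hspec : q1.append q2 = c' := take_spec c' hb'
  -- lengths
  have hlen' : q1.length + q2.length = c.length := by
    have h1 := congrArg Walk.length hspec
    rw [Walk.length_append] at h1
    have h2 := congrArg Walk.length (take_spec c ha)
    rw [Walk.length_append] at h2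
    have h3 : c'.length = (c.dropUntil a ha).length + (c.takeUntil a ha).length := by
      rw [hc'def, Walk.rotate, Walk.length_append]
    omega
  -- edges of c' split
  have hedges : c'.edges = q1.edges ++ q2.edges := by
    conv_lhs => rw [← hspec]
    exact Walk.edges_append _ _
  have hEnd : (q1.edges ++ q2.edges).Nodup := by
    rw [← hedges]; exact hc'.isTrail.edges_nodup
  obtain ⟨hE1, hE2, hEdisj⟩ := List.nodup_append'.mp hEnd
  -- supports of c' split
  have hsupp : c'.support.tail = q1.support.tail ++ q2.support.tail := by
    conv_lhs => rw [← hspec]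
    exact Walk.tail_support_append _ _
  have hSnd : (q1.support.tail ++ q2.support.tail).Nodup := by
    rw [← hsupp]; exact hc'.support_nodup
  obtain ⟨hS1, hS2, hSdisj⟩ := List.nodup_append'.mp hSnd
  -- b is in the tail of q1's support, a in tail of q2's support
  have hbq1 : b ∈ q1.support.tail := Walk.end_mem_tail_support_of_ne hab q1
  have haq2 : a ∈ q2.support.tail := Walk.end_mem_tail_support_of_ne hab.symm q2
  have hbnotq2 : b ∉ q2.support.tail := fun h => hSdisj hbq1 h
  have hanotq1 : a ∉ q1.support.tail := fun h => hSdisj h haq2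
  -- edges of q1, q2 lie in c
  have hq1edges : ∀ e ∈ q1.edges, e ∈ c.edges := by
    intro e he
    have : e ∈ c'.edges := edges_takeUntil_subset c' hb' he
    exact (rotate_edges c a ha).perm.mem_iff.mp this
  have hq2edges : ∀ e ∈ q2.edges, e ∈ c.edges := by
    intro e he
    have : e ∈ c'.edges := edges_dropUntil_subset c' hb' he
    exact (rotate_edges c a ha).perm.mem_iff.mp this
  -- supports of q1, q2 lie in c
  have hq1supp : ∀ v ∈ q1.support, v ∈ c.support :=
    fun v hv => hsub v (support_takeUntil_subset c' hb' hv)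
  have hq2supp : ∀ v ∈ q2.support, v ∈ c.support :=
    fun v hv => hsub v (support_dropUntil_subset c' hb' hv)
  -- p's support facts
  have hps := hp.support_nodup
  rw [p.support_eq_cons] at hps
  obtain ⟨hanotp, hptail⟩ := List.nodup_cons.mp hps
  have hpr := hp.reverse
  have hprs := hpr.support_nodup
  rw [p.reverse.support_eq_cons] at hprs
  obtain ⟨hbnotpr, hprtail⟩ := List.nodup_cons.mp hprs
  -- Cycle 1: p ++ q2
  have hcyc1 : (p.append q2).IsCycle := by
    rw [Walk.isCycle_def]
    refine ⟨⟨?_⟩, ?_, ?_⟩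
    · rw [Walk.edges_append, List.nodup_append']
      refine ⟨hp.isTrail.edges_nodup, hE2, ?_⟩
      intro e hep heq
      exact hedge e hep (hq2edges e heq)
    · intro h
      have := congrArg Walk.length h
      rw [Walk.length_append] at this
      simp only [Walk.length_nil] at this
      omega
    · rw [Walk.tail_support_append, List.nodup_append']
      refine ⟨hptail, hS2, ?_⟩
      intro v hvp hvq
      have hvpS : v ∈ p.support := by
        rw [p.support_eq_cons]; exact List.mem_cons_of_mem _ hvp
      have hvc : v ∈ c.support := hq2supp v (List.mem_of_mem_tail hvq)
      by_cases hva : v = a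
      · exact hanotp (hva ▸ hvp)
      by_cases hvb : v = b
      · exact hbnotq2 (hvb ▸ hvq)
      exact hint v hvpS hva hvb hvc
  -- Cycle 2: q1 ++ p.reverse
  have hcyc2 : (q1.append p.reverse).IsCycle := by
    rw [Walk.isCycle_def]
    refine ⟨⟨?_⟩, ?_, ?_⟩
    · rw [Walk.edges_append, List.nodup_append']
      refine ⟨hE1, hpr.isTrail.edges_nodup, ?_⟩
      intro e heq hep
      have hep' : e ∈ p.edges := by
        rw [Walk.edges_reverse, List.mem_reverse] at hep; exact hep
      exact hedge e hep' (hq1edges e heq)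
    · intro h
      have := congrArg Walk.length h
      rw [Walk.length_append] at this
      simp only [Walk.length_reverse, Walk.length_nil] at this
      omega
    · rw [Walk.tail_support_append, List.nodup_append']
      refine ⟨hS1, hprtail, ?_⟩
      intro v hvq hvp
      have hvpS : v ∈ p.support := by
        have : v ∈ p.reverse.support := by
          rw [p.reverse.support_eq_cons]; exact List.mem_cons_of_mem _ hvp
        rw [Walk.support_reverse, List.mem_reverse] at this
        exact this
      have hvc : v ∈ c.support := hq1supp v (List.mem_of_mem_tail hvq)
      by_cases hvb : v = b
      · exact hbnotpr (hvb ▸ hvp)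
      by_cases hva : v = a
      · exact hanotq1 (hva ▸ hvq)
      exact hint v hvpS hva hvb hvc
  -- minimality applied to both cycles
  have h1 := hshort a _ hcyc1
  have h2 := hshort a _ hcyc2
  rw [Walk.length_append] at h1 h2
  rw [Walk.length_reverse] at h2
  omega
end

section
/- Let G be a graph of minimum degree at least 3 on n vertices. Then the girth of G is less than 2·log₂(n). -/
open SimpleGraph Finset

variable {V : Type} [DecidableEq V] {G : SimpleGraph V}

lemma two_paths_aux (n : ℕ) : ∀ {x y : V} (p q : G.Walk x y), q.length ≤ n →
    p.IsPath → q.IsPath → p ≠ q →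
    ∃ (z : V) (c : G.Walk z z), c.IsCycle ∧ c.length ≤ p.length + q.length := by
  induction n with
  | zero =>
    intro x y p q hql hp hq hne
    cases q with
    | nil =>
      cases p with
      | nil => exact absurd rfl hne
      | cons h p' =>
        exact absurd (p'.end_mem_support) ((SimpleGraph.Walk.cons_isPath_iff h p').mp hp).2
    | cons h' q' => simp at hql
  | succ n ih =>
    intro x y p q hql hp hq hne
    cases q with
    | nil =>
      cases p with
      | nil => exact absurd rfl hne
      | cons h p' =>
        exact absurd (p'.end_mem_support) ((SimpleGraph.Walk.cons_isPath_iff h p').mp hp).2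
    | cons h' q' =>
      rename_i b
      by_cases hb : b ∈ p.support
      · cases p with
        | nil =>
          rw [SimpleGraph.Walk.mem_support_nil_iff] at hb
          exact absurd hb.symm h'.ne
        | cons h p'' =>
          rename_i a
          by_cases hab : a = b
          · subst hab
            have hpq : p'' ≠ q' := by rintro rfl; exact hne rfl
            obtain ⟨z, c, hc, hlen⟩ := ih p'' q' (by simpa using hql) hp.of_cons hq.of_cons hpq
            exact ⟨z, c, hc, by simp only [SimpleGraph.Walk.length_cons]; omega⟩
          · -- cycle construction
            set p₁ := (SimpleGraph.Walk.cons h p'').takeUntil b hb with hp₁def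
            have hp₁ : p₁.IsPath := hp.takeUntil hb
            have hedge : s(x, b) ∉ p₁.edges := by
              intro hmem
              have hmem' := SimpleGraph.Walk.edges_takeUntil_subset (SimpleGraph.Walk.cons h p'') hb hmem
              rw [SimpleGraph.Walk.edges_cons, List.mem_cons] at hmem'
              rcases hmem' with heq | hmem' 
              · rw [Sym2.eq_iff] at heq
                rcases heq with ⟨-, h2⟩ | ⟨h1, -⟩
                · exact hab h2.symm
                · exact h.ne h1
              · exact ((SimpleGraph.Walk.cons_isPath_iff h p'').mp hp).2
                  (SimpleGraph.Walk.fst_mem_support_of_mem_edges p'' hmem')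
            refine ⟨x, SimpleGraph.Walk.cons h' p₁.reverse, ?_, ?_⟩
            · rw [SimpleGraph.Walk.cons_isCycle_iff]
              refine ⟨hp₁.reverse, ?_⟩
              rw [SimpleGraph.Walk.edges_reverse, List.mem_reverse]
              exact hedge
            · have := SimpleGraph.Walk.length_takeUntil_le (SimpleGraph.Walk.cons h p'') hb
              rw [← hp₁def] at this
              simp only [SimpleGraph.Walk.length_cons, SimpleGraph.Walk.length_reverse] at this ⊢
              omega
      · -- b ∉ p.support : step along q
        have hp₂ : (SimpleGraph.Walk.cons h'.symm p).IsPath := by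
          rw [SimpleGraph.Walk.cons_isPath_iff]
          exact ⟨hp, hb⟩
        have hne₂ : SimpleGraph.Walk.cons h'.symm p ≠ q' := by
          intro heq
          have : x ∈ q'.support := by
            rw [← heq]
            simp [p.start_mem_support]
          exact ((SimpleGraph.Walk.cons_isPath_iff h' q').mp hq).2 this
        obtain ⟨z, c, hc, hlen⟩ := ih (SimpleGraph.Walk.cons h'.symm p) q'
          (by simpa using hql) hp₂ hq.of_cons hne₂
        exact ⟨z, c, hc, by simp only [SimpleGraph.Walk.length_cons] at hlen ⊢; omega⟩

lemma two_paths {x y : V} (p q : G.Walk x y) (hp : p.IsPath) (hq : q.IsPath) (hne : p ≠ q) :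
    ∃ (z : V) (c : G.Walk z z), c.IsCycle ∧ c.length ≤ p.length + q.length :=
  two_paths_aux q.length p q le_rfl hp hq hne

lemma no_two_close (e : ℕ)
    (hg : ∀ (z : V) (c : G.Walk z z), c.IsCycle → 2 * e + 3 ≤ c.length)
    {v u w₁ w₂ : V} (h1 : G.Adj u w₁) (h2 : G.Adj u w₂) (hw : w₁ ≠ w₂)
    (hr1 : G.Reachable v w₁) (hr2 : G.Reachable v w₂)
    (hd1 : G.dist v w₁ ≤ e) (hd2 : G.dist v w₂ ≤ e) (hdu : e ≤ G.dist v u) : False := by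
  obtain ⟨q₁, hq₁len⟩ := hr1.exists_walk_length_eq_dist
  obtain ⟨q₂, hq₂len⟩ := hr2.exists_walk_length_eq_dist
  have hq₁path : q₁.IsPath := q₁.isPath_of_length_eq_dist hq₁len
  have hq₂path : q₂.IsPath := q₂.isPath_of_length_eq_dist hq₂len
  have hu₁ : u ∉ q₁.support := by
    intro hmem
    have ht1 := SimpleGraph.Walk.length_takeUntil_le q₁ hmem
    have ht2 := SimpleGraph.dist_le (q₁.takeUntil u hmem)
    have ht3 := congrArg SimpleGraph.Walk.length (q₁.take_spec hmem)
    rw [SimpleGraph.Walk.length_append] at ht3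
    have ht4 : (q₁.dropUntil u hmem).length = 0 := by omega
    exact h1.ne (SimpleGraph.Walk.eq_of_length_eq_zero ht4)
  have hu₂ : u ∉ q₂.support := by
    intro hmem
    have ht1 := SimpleGraph.Walk.length_takeUntil_le q₂ hmem
    have ht2 := SimpleGraph.dist_le (q₂.takeUntil u hmem)
    have ht3 := congrArg SimpleGraph.Walk.length (q₂.take_spec hmem)
    rw [SimpleGraph.Walk.length_append] at ht3
    have ht4 : (q₂.dropUntil u hmem).length = 0 := by omega
    exact h2.ne (SimpleGraph.Walk.eq_of_length_eq_zero ht4)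
  have hP₁ : (SimpleGraph.Walk.cons h1 q₁.reverse).IsPath := by
    rw [SimpleGraph.Walk.cons_isPath_iff]
    refine ⟨hq₁path.reverse, ?_⟩
    rw [SimpleGraph.Walk.support_reverse, List.mem_reverse]
    exact hu₁
  have hP₂ : (SimpleGraph.Walk.cons h2 q₂.reverse).IsPath := by
    rw [SimpleGraph.Walk.cons_isPath_iff]
    refine ⟨hq₂path.reverse, ?_⟩
    rw [SimpleGraph.Walk.support_reverse, List.mem_reverse]
    exact hu₂
  have hPne : (SimpleGraph.Walk.cons h1 q₁.reverse).reverse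
      ≠ (SimpleGraph.Walk.cons h2 q₂.reverse).reverse := by
    intro heq
    have heq2 := congrArg SimpleGraph.Walk.reverse heq
    simp only [SimpleGraph.Walk.reverse_reverse] at heq2
    have := congrArg (fun w => w.getVert 1) heq2
    simp only [SimpleGraph.Walk.getVert_cons _ _ one_ne_zero, Nat.sub_self,
      SimpleGraph.Walk.getVert_zero] at this
    exact hw this
  obtain ⟨z, c, hc, hlen⟩ := two_paths _ _ hP₁.reverse hP₂.reverse hPne
  have := hg z c hc
  simp only [SimpleGraph.Walk.length_reverse, SimpleGraph.Walk.length_cons] at hlen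
  omega

open Finset in
lemma sphere_grow [Fintype V] [DecidableRel G.Adj] (v : V) (i : ℕ) (hi : 1 ≤ i)
    (hg : ∀ (z : V) (c : G.Walk z z), c.IsCycle → 2 * i + 3 ≤ c.length)
    (hdeg : ∀ u : V, 3 ≤ G.degree u) :
    2 * (univ.filter (fun u => G.dist v u = i)).card
      ≤ (univ.filter (fun u => G.dist v u = i + 1)).card := by
  classical
  have key2 : ∀ u : V, G.dist v u = i →
      2 ≤ ((G.neighborFinset u).filter (fun w => G.dist v w = i + 1)).card := by
    intro u hu
    have hru : G.Reachable v u := SimpleGraph.Reachable.of_dist_ne_zero (by omega)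
    set A := (G.neighborFinset u).filter (fun w => G.dist v w ≤ i) with hA
    set B := (G.neighborFinset u).filter (fun w => G.dist v w = i + 1) with hB
    have hA1 : A.card ≤ 1 := by
      rw [Finset.card_le_one]
      intro w₁ hw₁ w₂ hw₂
      rw [hA, Finset.mem_filter, SimpleGraph.mem_neighborFinset] at hw₁ hw₂
      by_contra hne
      exact no_two_close i hg hw₁.1 hw₂.1 hne
        (hru.trans hw₁.1.reachable) (hru.trans hw₂.1.reachable)
        hw₁.2 hw₂.2 (le_of_eq hu.symm)
    have hcover : G.neighborFinset u ⊆ A ∪ B := by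
      intro w hwmem
      have hadj : G.Adj u w := (SimpleGraph.mem_neighborFinset _ _ _).mp hwmem
      obtain ⟨p, hp⟩ := hru.exists_walk_length_eq_dist
      have hdw : G.dist v w ≤ i + 1 := by
        have := SimpleGraph.dist_le (p.concat hadj)
        rw [SimpleGraph.Walk.length_concat, hp, hu] at this
        exact this
      rw [Finset.mem_union, hA, hB, Finset.mem_filter, Finset.mem_filter]
      rcases Nat.lt_or_ge (G.dist v w) (i + 1) with hlt | hge
      · exact Or.inl ⟨hwmem, by omega⟩
      · exact Or.inr ⟨hwmem, by omega⟩
    have h3 : 3 ≤ (G.neighborFinset u).card := by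
      rw [SimpleGraph.card_neighborFinset_eq_degree]; exact hdeg u
    have := Finset.card_le_card hcover
    have := Finset.card_union_le A B
    omega
  have hch : ∀ u : V, ∃ pr : V × V, G.dist v u = i →
      pr.1 ∈ (G.neighborFinset u).filter (fun w => G.dist v w = i + 1)
      ∧ pr.2 ∈ (G.neighborFinset u).filter (fun w => G.dist v w = i + 1)
      ∧ pr.1 ≠ pr.2 := by
    intro u
    by_cases hu : G.dist v u = i
    · have h2c : 1 < ((G.neighborFinset u).filter (fun w => G.dist v w = i + 1)).card := by
        have := key2 u hu; omega
      obtain ⟨a, ha, b, hb, hab⟩ := Finset.one_lt_card.mp h2c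
      exact ⟨(a, b), fun _ => ⟨ha, hb, hab⟩⟩
    · exact ⟨(u, u), fun h => absurd h hu⟩
  choose F hF using hch
  have := Finset.card_le_card_of_injOn
    (f := fun x : V × Bool => if x.2 then (F x.1).1 else (F x.1).2)
    (s := (univ.filter (fun u => G.dist v u = i)) ×ˢ (univ : Finset Bool))
    (t := univ.filter (fun u => G.dist v u = i + 1))
    ?_ ?_
  · rw [Finset.card_product, Finset.card_univ, Fintype.card_bool] at this
    omega
  · rintro ⟨u, b⟩ hmem
    rw [Finset.mem_coe, Finset.mem_product, Finset.mem_filter] at hmem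
    obtain ⟨h1, h2, h3⟩ := hF u hmem.1.2
    rw [Finset.mem_coe]
    rw [Finset.mem_filter] at h1 h2 ⊢
    cases b <;> simp only [if_true, if_false, Bool.false_eq_true] <;>
      [exact ⟨Finset.mem_univ _, h2.2⟩; exact ⟨Finset.mem_univ _, h1.2⟩]
  · rintro ⟨u, b⟩ hmem ⟨u', b'⟩ hmem' heq
    rw [Finset.mem_coe, Finset.mem_product, Finset.mem_filter] at hmem hmem'
    have hu : G.dist v u = i := hmem.1.2
    have hu' : G.dist v u' = i := hmem'.1.2
    obtain ⟨m1, m2, m3⟩ := hF u hu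
    obtain ⟨m1', m2', m3'⟩ := hF u' hu'
    rw [Finset.mem_filter, SimpleGraph.mem_neighborFinset] at m1 m2 m1' m2'
    have heq' : (if b then (F u).1 else (F u).2) = (if b' then (F u').1 else (F u').2) := heq
    have hw1 : G.Adj u (if b then (F u).1 else (F u).2)
        ∧ G.dist v (if b then (F u).1 else (F u).2) = i + 1 := by
      cases b
      · exact ⟨m2.1, m2.2⟩
      · exact ⟨m1.1, m1.2⟩
    have hw2 : G.Adj u' (if b then (F u).1 else (F u).2)
        ∧ G.dist v (if b then (F u).1 else (F u).2) = i + 1 := by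
      rw [heq']
      cases b'
      · exact ⟨m2'.1, m2'.2⟩
      · exact ⟨m1'.1, m1'.2⟩
    have huu' : u = u' := by
      by_contra hne
      exact no_two_close i hg hw1.1.symm hw2.1.symm hne
        (SimpleGraph.Reachable.of_dist_ne_zero (by omega))
        (SimpleGraph.Reachable.of_dist_ne_zero (by omega))
        (le_of_eq hu) (le_of_eq hu') (by omega)
    subst huu'
    have hbb' : b = b' := by
      cases b <;> cases b'
      · rfl
      · exact absurd heq'.symm m3
      · exact absurd heq' m3
      · rfl
    rw [hbb']

open Finset in
lemma sphere_lb [Fintype V] [DecidableRel G.Adj] (v : V) (m : ℕ)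
    (hg : ∀ (z : V) (c : G.Walk z z), c.IsCycle → 2 * m + 1 ≤ c.length)
    (hdeg : ∀ u : V, 3 ≤ G.degree u) :
    ∀ j : ℕ, 1 ≤ j → j ≤ m → 3 * 2 ^ (j - 1) ≤ (univ.filter (fun u => G.dist v u = j)).card := by
  intro j
  induction j with
  | zero => omega
  | succ j ih =>
    intro _ hjm
    rcases Nat.eq_or_lt_of_le (show 1 ≤ j + 1 by omega) with h1 | h1
    · -- j + 1 = 1, base case
      have hsub : G.neighborFinset v ⊆ univ.filter (fun u => G.dist v u = j + 1) := by
        intro w hw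
        rw [SimpleGraph.mem_neighborFinset] at hw
        rw [Finset.mem_filter]
        exact ⟨Finset.mem_univ _, by rw [← h1]; exact SimpleGraph.dist_eq_one_iff_adj.mpr hw⟩
      have := Finset.card_le_card hsub
      have h3 := hdeg v
      rw [← SimpleGraph.card_neighborFinset_eq_degree] at h3
      have : j + 1 - 1 = 0 := by omega
      rw [this]
      simp only [pow_zero]
      omega
    · -- j ≥ 1
      have hj1 : 1 ≤ j := by omega
      have hgrow := sphere_grow v j hj1 (fun z c hc => by have := hg z c hc; omega) hdeg
      have hih := ih hj1 (by omega)
      have hpow : 2 ^ (j + 1 - 1) = 2 * 2 ^ (j - 1) := by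
        have : j + 1 - 1 = (j - 1) + 1 := by omega
        rw [this, pow_succ]; ring
      rw [hpow]
      omega

open Finset in
lemma ball_lb [Fintype V] [DecidableRel G.Adj] (v : V) (m : ℕ)
    (hg : ∀ (z : V) (c : G.Walk z z), c.IsCycle → 2 * m + 1 ≤ c.length)
    (hdeg : ∀ u : V, 3 ≤ G.degree u) :
    3 * (2 ^ m - 1) ≤ Fintype.card V := by
  classical
  have hdisj : ∀ j₁ ∈ Finset.Icc 1 m, ∀ j₂ ∈ Finset.Icc 1 m, j₁ ≠ j₂ →
      Disjoint (univ.filter (fun u => G.dist v u = j₁))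
        (univ.filter (fun u => G.dist v u = j₂)) := by
    intro j₁ _ j₂ _ hne
    rw [Finset.disjoint_left]
    intro a ha hb
    rw [Finset.mem_filter] at ha hb
    exact hne (ha.2 ▸ hb.2)
  have hcard := Finset.card_biUnion hdisj
  have hle : ((Finset.Icc 1 m).biUnion
      (fun j => univ.filter (fun u => G.dist v u = j))).card ≤ Fintype.card V := by
    rw [← Finset.card_univ]
    exact Finset.card_le_card (Finset.subset_univ _)
  rw [hcard] at hle
  have hsum : ∑ j ∈ Finset.Icc 1 m, 3 * 2 ^ (j - 1)
      ≤ ∑ j ∈ Finset.Icc 1 m, (univ.filter (fun u => G.dist v u = j)).card := by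
    apply Finset.sum_le_sum
    intro j hj
    rw [Finset.mem_Icc] at hj
    exact sphere_lb v m hg hdeg j hj.1 hj.2
  have hgeom : ∀ k : ℕ, ∑ j ∈ Finset.Icc 1 k, 3 * 2 ^ (j - 1) = 3 * (2 ^ k - 1) := by
    intro k
    induction k with
    | zero => simp
    | succ k ihk =>
      rw [Finset.sum_Icc_succ_top (by omega : 1 ≤ k + 1), ihk]
      have h1 : 1 ≤ 2 ^ k := Nat.one_le_two_pow
      have h2 : 2 ^ (k + 1) = 2 * 2 ^ k := by rw [pow_succ]; ring
      have h3 : k + 1 - 1 = k := by omega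
      rw [h3, h2]
      omega
  rw [hgeom] at hsum
  omega

open Finset in
lemma K4_triangle [Fintype V] [Nonempty V] [DecidableRel G.Adj]
    (h4 : Fintype.card V = 4) (hdeg : ∀ u : V, 3 ≤ G.degree u) :
    ∃ (z : V) (c : G.Walk z z), c.IsCycle ∧ c.length = 3 := by
  classical
  have hadj : ∀ a b : V, a ≠ b → G.Adj a b := by
    intro a b hne
    have hsub : G.neighborFinset a ⊆ univ.erase a := by
      intro w hw
      rw [SimpleGraph.mem_neighborFinset] at hw
      exact Finset.mem_erase.mpr ⟨hw.ne', Finset.mem_univ _⟩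
    have hcard : (univ.erase a).card = 3 := by
      rw [Finset.card_erase_of_mem (Finset.mem_univ _), Finset.card_univ, h4]
    have h3 : 3 ≤ (G.neighborFinset a).card := by
      rw [SimpleGraph.card_neighborFinset_eq_degree]; exact hdeg a
    have heq : G.neighborFinset a = univ.erase a :=
      Finset.eq_of_subset_of_card_le hsub (by omega)
    have : b ∈ G.neighborFinset a := by
      rw [heq]; exact Finset.mem_erase.mpr ⟨hne.symm, Finset.mem_univ _⟩
    rwa [SimpleGraph.mem_neighborFinset] at this
  obtain ⟨u⟩ := ‹Nonempty V›
  have h1 : 0 < (univ.erase u).card := by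
    rw [Finset.card_erase_of_mem (Finset.mem_univ _), Finset.card_univ, h4]; omega
  obtain ⟨w, hw⟩ := Finset.card_pos.mp h1
  have hwu : w ≠ u := (Finset.mem_erase.mp hw).1
  have h2 : 0 < ((univ.erase u).erase w).card := by
    rw [Finset.card_erase_of_mem hw, Finset.card_erase_of_mem (Finset.mem_univ _),
      Finset.card_univ, h4]
    omega
  obtain ⟨x, hx⟩ := Finset.card_pos.mp h2
  have hxw : x ≠ w := (Finset.mem_erase.mp hx).1
  have hxu : x ≠ u := (Finset.mem_erase.mp (Finset.mem_erase.mp hx).2).1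
  refine ⟨u, SimpleGraph.Walk.cons (hadj u w hwu.symm)
    (SimpleGraph.Walk.cons (hadj w x hxw.symm)
      (SimpleGraph.Walk.cons (hadj x u hxu) SimpleGraph.Walk.nil)), ?_, rfl⟩
  rw [SimpleGraph.Walk.cons_isCycle_iff]
  constructor
  · rw [SimpleGraph.Walk.cons_isPath_iff]
    constructor
    · rw [SimpleGraph.Walk.cons_isPath_iff]
      refine ⟨SimpleGraph.Walk.IsPath.nil, ?_⟩
      simp [hxu]
    · simp [hwu, hxw.symm]
  · simp only [SimpleGraph.Walk.edges_cons, SimpleGraph.Walk.edges_nil, List.mem_cons,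
      List.not_mem_nil, or_false]
    push_neg
    constructor
    · intro hcontra
      rw [Sym2.eq_iff] at hcontra
      rcases hcontra with ⟨h, -⟩ | ⟨h, -⟩
      · exact absurd h hwu.symm
      · exact absurd h hxu.symm
    · intro hcontra
      rw [Sym2.eq_iff] at hcontra
      rcases hcontra with ⟨h, -⟩ | ⟨-, h⟩
      · exact absurd h hxu.symm
      · exact absurd h hxw.symm

open Finset in
/-- Alon–Hoory–Linial: every graph with minimum degree at least `3` on `n` vertices
has girth less than `2·log₂ n` (in particular it has a cycle). -/
theorem stmt_4 {V : Type} [Fintype V] [Nonempty V] [DecidableEq V] (G : SimpleGraph V)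
    [DecidableRel G.Adj]
    (hdeg : ∀ v : V, 3 ≤ G.degree v) :
    ∃ g : ℕ, G.egirth = g ∧ (g : ℝ) < 2 * Real.logb 2 (Fintype.card V) := by
  classical
  obtain ⟨v⟩ := ‹Nonempty V›
  have hn1 : 1 ≤ Fintype.card V := Fintype.card_pos
  have hcyc : ¬ G.IsAcyclic := by
    intro hac
    have hg : ∀ (z : V) (c : G.Walk z z), c.IsCycle →
        2 * (Fintype.card V + 1) + 1 ≤ c.length := fun z c hc => absurd hc (hac c)
    have hlb := sphere_lb v (Fintype.card V + 1) hg hdeg (Fintype.card V + 1) (by omega) le_rfl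
    have hle := Finset.card_filter_le (univ : Finset V)
      (fun u => G.dist v u = Fintype.card V + 1)
    rw [Finset.card_univ] at hle
    have hpow := Nat.lt_two_pow_self (n := Fintype.card V)
    simp only [Nat.add_sub_cancel] at hlb
    omega
  obtain ⟨a, w0, hw0, hgl⟩ := SimpleGraph.exists_egirth_eq_length.mpr hcyc
  have hg3 : 3 ≤ w0.length := hw0.three_le_length
  have hall : ∀ (z : V) (c : G.Walk z z), c.IsCycle → w0.length ≤ c.length := by
    intro z c hc
    have := SimpleGraph.le_egirth.mp (le_refl G.egirth) z c hc
    rw [hgl] at this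
    exact_mod_cast this
  refine ⟨w0.length, hgl, ?_⟩
  set g := w0.length with hgdef
  set n := Fintype.card V with hndef
  have hnpos : (0:ℝ) < (n:ℝ) := by exact_mod_cast hn1
  rcases Nat.even_or_odd g with he | ho
  · -- even case : g = r + r with r ≥ 2 ; show 2 ^ r < n
    obtain ⟨r, hr⟩ := he
    have hr2 : 2 ≤ r := by omega
    have h2r : 2 ^ r < n := by
      rcases Nat.eq_or_lt_of_le hr2 with h2 | h3
      · -- r = 2, g = 4
        have hs1 := sphere_lb v 1 (fun z c hc => by have := hall z c hc; omega) hdeg 1 le_rfl le_rfl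
        simp only [pow_zero, Nat.sub_self, mul_one] at hs1
        have hvmem : v ∉ univ.filter (fun u => G.dist v u = 1) := by
          simp [SimpleGraph.dist_self]
        have hins : (insert v (univ.filter (fun u => G.dist v u = 1))).card ≤ n := by
          rw [hndef, ← Finset.card_univ]
          exact Finset.card_le_card (Finset.subset_univ _)
        rw [Finset.card_insert_of_notMem hvmem] at hins
        have hne4 : n ≠ 4 := by
          intro h4
          obtain ⟨z, c, hc, hclen⟩ := K4_triangle (G := G) h4 hdeg
          have := hall z c hc
          omega
        rw [← h2]
        omega
      · -- r ≥ 3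
        have hgm := ball_lb v (r - 1) (fun z c hc => by have := hall z c hc; omega) hdeg
        have hsplit : 2 ^ r = 2 * 2 ^ (r - 1) := by
          conv_lhs => rw [show r = (r - 1) + 1 by omega]
          rw [pow_succ]; ring
        have h4le : 4 ≤ 2 ^ (r - 1) := by
          calc (4:ℕ) = 2 ^ 2 := rfl
          _ ≤ 2 ^ (r - 1) := Nat.pow_le_pow_right (by norm_num) (by omega)
        omega
    have hlog : (r : ℝ) < Real.logb 2 n := by
      have hcast : ((2:ℝ)) ^ (r:ℕ) < (n:ℝ) := by exact_mod_cast h2r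
      have : Real.logb 2 ((2:ℝ) ^ (r:ℕ)) < Real.logb 2 n :=
        Real.logb_lt_logb (by norm_num) (by positivity) hcast
      rwa [Real.logb_pow, Real.logb_self_eq_one (by norm_num), mul_one] at this
    have : (g : ℝ) = (r : ℝ) + (r : ℝ) := by rw [hr]; push_cast; ring
    rw [this]
    linarith
  · -- odd case : g = 2 * r + 1 with r ≥ 1
    obtain ⟨r, hr⟩ := ho
    have hr1 : 1 ≤ r := by omega
    have hs := sphere_lb v r (fun z c hc => by have := hall z c hc; omega) hdeg r hr1 le_rfl
    have hle := Finset.card_filter_le (univ : Finset V) (fun u => G.dist v u = r)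
    rw [Finset.card_univ, ← hndef] at hle
    have hnlb : 3 * 2 ^ (r - 1) ≤ n := le_trans hs hle
    -- logb 2 3 > 3/2
    have hlog2pos : (0:ℝ) < Real.log 2 := Real.log_pos (by norm_num)
    have h89 : Real.log 8 < Real.log 9 := Real.log_lt_log (by norm_num) (by norm_num)
    have h8 : Real.log 8 = 3 * Real.log 2 := by
      rw [show (8:ℝ) = 2 ^ (3:ℕ) by norm_num, Real.log_pow]; push_cast; ring
    have h9 : Real.log 9 = 2 * Real.log 3 := by
      rw [show (9:ℝ) = 3 ^ (2:ℕ) by norm_num, Real.log_pow]; push_cast; ring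
    have hlogb3 : (3:ℝ) / 2 < Real.logb 2 3 := by
      rw [Real.logb, div_lt_div_iff₀ (by norm_num) hlog2pos]
      linarith
    have hmono : Real.logb 2 ((3 * 2 ^ (r - 1) : ℕ) : ℝ) ≤ Real.logb 2 n :=
      Real.logb_le_logb_of_le (by norm_num) (by positivity) (by exact_mod_cast hnlb)
    have hcomp : Real.logb 2 ((3 * 2 ^ (r - 1) : ℕ) : ℝ)
        = Real.logb 2 3 + ((r:ℝ) - 1) := by
      push_cast
      rw [Real.logb_mul (by norm_num) (by positivity), Real.logb_pow,
        Real.logb_self_eq_one (by norm_num), mul_one]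
      have : ((r - 1 : ℕ) : ℝ) = (r : ℝ) - 1 := by
        rw [Nat.cast_sub hr1]; norm_num
      rw [this]
    have hgr : (g : ℝ) = 2 * (r : ℝ) + 1 := by rw [hr]; push_cast; ring
    rw [hgr]
    rw [hcomp] at hmono
    linarith
end

section
/- Let G be a graph with a tree-decomposition of independence number at most w, and suppose G - B_G(X,1) is a forest for some vertex set X with |X| ≤ f. If additionally every ball B_G(v,1) for v in X induces a subgraph of independence number less than t, then G has a tree-decomposition of independence number at most f·(t-1) + 2. -/
/-- The ball of radius `d` around a set `S` of vertices. -/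
def SimpleGraph.vertexBall {V : Type} (G : SimpleGraph V) (S : Set V) (d : ℕ) : Set V :=
  {u | ∃ v ∈ S, ∃ p : G.Walk v u, p.length ≤ d}

/-- A tree-decomposition of a graph `G` indexed by a type `ι`. -/
structure TreeDecomp {V : Type} (G : SimpleGraph V) (ι : Type) where
  tree : SimpleGraph ι
  isTree : tree.IsTree
  bag : ι → Set V
  covers : ∀ v : V, ∃ i, v ∈ bag i
  coversEdge : ∀ ⦃u v : V⦄, G.Adj u v → ∃ i, u ∈ bag i ∧ v ∈ bag i
  subtree : ∀ v : V, (tree.induce {i | v ∈ bag i}).Connected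

/-- The tree-decomposition has independence number at most `w`: every independent set
contained in a bag has size at most `w`. -/
def TreeDecomp.IndepNumLE {V : Type} [DecidableEq V] {G : SimpleGraph V} {ι : Type}
    (D : TreeDecomp G ι) (w : ℕ) : Prop :=
  ∀ i, ∀ s : Finset V, ↑s ⊆ D.bag i →
    (↑s : Set V).Pairwise (fun a b => ¬ G.Adj a b) → s.card ≤ w

open SimpleGraph

private lemma loop_isPath_eq_nil {V : Type*} {G : SimpleGraph V} {v : V} :
    ∀ (p : G.Walk v v), p.IsPath → p = SimpleGraph.Walk.nil
  | SimpleGraph.Walk.nil, _ => rfl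
  | SimpleGraph.Walk.cons _ q, hp => by
    exfalso
    rw [SimpleGraph.Walk.cons_isPath_iff] at hp
    exact hp.2 (SimpleGraph.Walk.end_mem_support q)

private lemma isTree_of_up {α : Type} (up : α → α) (rank : α → ℕ) (r : α)
    (huniq : ∀ a, up a = a → a = r)
    (hdec : ∀ a, up a ≠ a → rank (up a) < rank a) :
    (SimpleGraph.fromRel (fun a b => up a = b)).IsTree := by
  set T := SimpleGraph.fromRel (fun a b => up a = b) with hT
  have hadj_iff : ∀ a b, T.Adj a b ↔ a ≠ b ∧ (up a = b ∨ up b = a) := by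
    intro a b; rw [hT]; exact SimpleGraph.fromRel_adj _ a b
  have key : ∀ a b, T.Adj a b → rank b ≤ rank a → up a = b := by
    intro a b hab hle
    rcases (hadj_iff a b).mp hab with ⟨hne, h | h⟩
    · exact h
    · exfalso
      have hb : up b ≠ b := by
        intro e; exact hne (by rw [← h, e])
      have := hdec b hb; rw [h] at this; omega
  constructor
  · rw [SimpleGraph.connected_iff]
    have reach : ∀ n a, rank a ≤ n → T.Reachable a r := by
      intro n; induction n with
      | zero =>
        intro a ha
        by_cases hfa : up a = a
        · rw [huniq a hfa]
        · exact absurd (hdec a hfa) (by omega)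
      | succ n ih =>
        intro a ha
        by_cases hfa : up a = a
        · rw [huniq a hfa]
        · have hadj : T.Adj a (up a) :=
            (hadj_iff _ _).mpr ⟨fun e => hfa e.symm, Or.inl rfl⟩
          exact hadj.reachable.trans (ih (up a) (by have := hdec a hfa; omega))
    exact ⟨fun a b => (reach _ a le_rfl).trans (reach _ b le_rfl).symm, ⟨r⟩⟩
  · classical
    intro a c hc
    obtain ⟨m, hm⟩ : ∃ m, m ∈ c.support.argmax rank := by
      cases h : c.support.argmax rank with
      | none => exact absurd (List.argmax_eq_none.mp h) c.support_ne_nil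
      | some m => exact ⟨m, Option.mem_def.mpr rfl⟩
    have hm_mem : m ∈ c.support := List.argmax_mem hm
    have hmax : ∀ x ∈ c.support, rank x ≤ rank m := fun x hx => List.le_of_mem_argmax hx hm
    have hc' := hc.rotate hm_mem
    set c' := c.rotate m hm_mem with hc'def
    have hsup : ∀ x ∈ c'.support, rank x ≤ rank m := by
      intro x hx
      rw [SimpleGraph.Walk.support_eq_cons] at hx
      rcases List.mem_cons.mp hx with rfl | hx
      · exact le_rfl
      · exact hmax x (List.mem_of_mem_tail
          (((SimpleGraph.Walk.support_rotate c m hm_mem).mem_iff).mp hx))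
    obtain ⟨b, hadj1, p, hpeq⟩ := SimpleGraph.Walk.not_nil_iff.mp hc'.not_nil
    rw [hpeq] at hc'
    have hp_path : p.IsPath := ((SimpleGraph.Walk.cons_isCycle_iff p hadj1).mp hc').1
    have hlen : 2 ≤ p.length := by
      have h3 := hc'.three_le_length
      simp only [SimpleGraph.Walk.length_cons] at h3
      omega
    have hbsup : b ∈ c'.support := by
      rw [hpeq, SimpleGraph.Walk.support_cons]
      exact List.mem_cons_of_mem _ p.start_mem_support
    have hub : up m = b := key m b hadj1 (hsup b hbsup)
    have hrevnil : ¬ p.reverse.Nil := by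
      rw [SimpleGraph.Walk.not_nil_iff_lt_length, SimpleGraph.Walk.length_reverse]
      omega
    obtain ⟨d, hadj2, q, hqeq⟩ := SimpleGraph.Walk.not_nil_iff.mp hrevnil
    have hdsup : d ∈ c'.support := by
      have hd : d ∈ p.reverse.support := by
        rw [hqeq, SimpleGraph.Walk.support_cons]
        exact List.mem_cons_of_mem _ q.start_mem_support
      rw [SimpleGraph.Walk.support_reverse, List.mem_reverse] at hd
      rw [hpeq, SimpleGraph.Walk.support_cons]
      exact List.mem_cons_of_mem _ hd
    have hud : up m = d := key m d hadj2 (hsup d hdsup)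
    have hbd : d = b := by rw [← hub, ← hud]
    subst hbd
    have hrevpath : p.reverse.IsPath := hp_path.reverse
    rw [hqeq, SimpleGraph.Walk.cons_isPath_iff] at hrevpath
    have hqnil : q = SimpleGraph.Walk.nil := loop_isPath_eq_nil q hrevpath.1
    have : p.reverse.length = 1 := by rw [hqeq, hqnil]; rfl
    rw [SimpleGraph.Walk.length_reverse] at this
    omega
open SimpleGraph

section Forest
variable {W : Type} [DecidableEq W] (H : SimpleGraph W)

noncomputable def groot (u : W) : W := (H.connectedComponentMk u).out

lemma reach_groot (u : W) : H.Reachable u (groot H u) :=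
  (ConnectedComponent.exact ((H.connectedComponentMk u).out_eq)).symm

lemma groot_eq_of_adj {u v : W} (h : H.Adj u v) : groot H u = groot H v :=
  congrArg Quot.out (ConnectedComponent.sound h.reachable)

noncomputable def gP (u : W) : H.Walk u (groot H u) :=
  ((reach_groot H u).exists_walk_length_eq_dist).choose.bypass

lemma gP_isPath (u : W) : (gP H u).IsPath := SimpleGraph.Walk.bypass_isPath _

lemma gP_length (u : W) : (gP H u).length = H.dist u (groot H u) := by
  refine le_antisymm ?_ (SimpleGraph.dist_le _)
  calc (gP H u).length ≤ _ := SimpleGraph.Walk.length_bypass_le _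
  _ = H.dist u (groot H u) := ((reach_groot H u).exists_walk_length_eq_dist).choose_spec

noncomputable def gparent (u : W) : W := (gP H u).getVert 1

open Classical in
noncomputable def pvF (u : W) : W := if groot H u = u then u else gparent H u

lemma dist_pos_of_not_root {u : W} (h : groot H u ≠ u) : 0 < H.dist u (groot H u) := by
  rcases Nat.eq_zero_or_pos (H.dist u (groot H u)) with h0 | h1
  · exact absurd ((reach_groot H u).dist_eq_zero_iff.mp h0).symm h
  · exact h1

lemma gP_cons {u : W} (h : groot H u ≠ u) :
    ∃ (b : W) (hb : H.Adj u b) (q : H.Walk b (groot H u)),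
      gP H u = SimpleGraph.Walk.cons hb q ∧ gparent H u = b := by
  have hnil : ¬ (gP H u).Nil := by
    rw [SimpleGraph.Walk.not_nil_iff_lt_length, gP_length]
    exact dist_pos_of_not_root H h
  obtain ⟨b, hb, q, hq⟩ := SimpleGraph.Walk.not_nil_iff.mp hnil
  exact ⟨b, hb, q, hq, by rw [gparent, hq, SimpleGraph.Walk.getVert_cons_succ, SimpleGraph.Walk.getVert_zero]⟩

lemma gparent_adj {u : W} (h : groot H u ≠ u) : H.Adj u (gparent H u) := by
  obtain ⟨b, hb, q, _, hpar⟩ := gP_cons H h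
  rw [hpar]; exact hb

lemma gparent_dist {u : W} (h : groot H u ≠ u) :
    H.dist (gparent H u) (groot H (gparent H u)) < H.dist u (groot H u) := by
  obtain ⟨b, hb, q, hq, hpar⟩ := gP_cons H h
  have hroot : groot H (gparent H u) = groot H u := (groot_eq_of_adj H (gparent_adj H h)).symm
  rw [hroot, hpar]
  have hlen : q.length + 1 = H.dist u (groot H u) := by
    have := gP_length H u
    rw [hq, SimpleGraph.Walk.length_cons] at this
    omega
  have := SimpleGraph.dist_le q
  omega

variable {H}

lemma forest_helper (hac : H.IsAcyclic) {u v : W} (h : H.Adj u v)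
    (hlt : H.dist v (groot H v) < H.dist u (groot H u)) :
    groot H u ≠ u ∧ gparent H u = v := by
  have hr : groot H v = groot H u := (groot_eq_of_adj H h).symm
  set q0 : H.Walk v (groot H u) := (gP H v).copy rfl hr with hq0
  have hq0len : q0.length = H.dist v (groot H v) := by
    rw [hq0, SimpleGraph.Walk.length_copy, gP_length]
  have hu : u ∉ q0.support := by
    intro hu
    have h1 := SimpleGraph.dist_le (q0.dropUntil u hu)
    have h2 := SimpleGraph.Walk.length_dropUntil_le q0 hu
    omega
  have hq : (SimpleGraph.Walk.cons h q0).IsPath := by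
    rw [SimpleGraph.Walk.cons_isPath_iff]
    exact ⟨by rw [hq0]; exact (SimpleGraph.Walk.isPath_copy _ _ _).mpr (gP_isPath H v), hu⟩
  have huniq := hac.path_unique ⟨gP H u, gP_isPath H u⟩ ⟨SimpleGraph.Walk.cons h q0, hq⟩
  have heq : gP H u = SimpleGraph.Walk.cons h q0 := congrArg Subtype.val huniq
  constructor
  · intro hroot
    have : H.dist u (groot H u) = 0 := by rw [hroot]; exact SimpleGraph.dist_self
    omega
  · rw [gparent, heq, SimpleGraph.Walk.getVert_cons_succ, SimpleGraph.Walk.getVert_zero]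

lemma forest_helper_ne (hac : H.IsAcyclic) {u v : W} (h : H.Adj u v) :
    H.dist u (groot H u) ≠ H.dist v (groot H v) := by
  intro heq
  have hr : groot H v = groot H u := (groot_eq_of_adj H h).symm
  set q0 : H.Walk v (groot H u) := (gP H v).copy rfl hr with hq0
  have hq0len : q0.length = H.dist v (groot H v) := by
    rw [hq0, SimpleGraph.Walk.length_copy, gP_length]
  have hu : u ∉ q0.support := by
    intro hu
    have h1 := SimpleGraph.dist_le (q0.dropUntil u hu)
    have h2 := congrArg SimpleGraph.Walk.length (q0.take_spec hu)
    rw [SimpleGraph.Walk.length_append] at h2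
    have h3 : (q0.takeUntil u hu).length = 0 := by omega
    exact h.ne (SimpleGraph.Walk.eq_of_length_eq_zero h3).symm
  have hq : (SimpleGraph.Walk.cons h q0).IsPath := by
    rw [SimpleGraph.Walk.cons_isPath_iff]
    exact ⟨by rw [hq0]; exact (SimpleGraph.Walk.isPath_copy _ _ _).mpr (gP_isPath H v), hu⟩
  have huniq := hac.path_unique ⟨gP H u, gP_isPath H u⟩ ⟨SimpleGraph.Walk.cons h q0, hq⟩
  have heq2 : gP H u = SimpleGraph.Walk.cons h q0 := congrArg Subtype.val huniq
  have hlen := congrArg SimpleGraph.Walk.length heq2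
  rw [gP_length, SimpleGraph.Walk.length_cons] at hlen
  omega

lemma forest_parent_or (hac : H.IsAcyclic) {u v : W} (h : H.Adj u v) :
    pvF H u = v ∨ pvF H v = u := by
  rcases lt_trichotomy (H.dist u (groot H u)) (H.dist v (groot H v)) with hlt | heq | hgt
  · right
    obtain ⟨hroot, hpar⟩ := forest_helper hac h.symm hlt
    rw [pvF, if_neg hroot, hpar]
  · exact absurd heq (forest_helper_ne hac h)
  · left
    obtain ⟨hroot, hpar⟩ := forest_helper hac h hgt
    rw [pvF, if_neg hroot, hpar]

lemma pvF_root {u : W} (h : groot H u = u) : pvF H u = u := by rw [pvF, if_pos h]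

lemma pvF_not_root {u : W} (h : groot H u ≠ u) : pvF H u = gparent H u := by
  rw [pvF, if_neg h]

end Forest
open SimpleGraph


private lemma mem_ball_iff' {V : Type} {G : SimpleGraph V} {X : Finset V} {u : V} :
    u ∈ G.vertexBall (↑X) 1 ↔ ∃ v ∈ X, u ∈ G.vertexBall {v} 1 := by
  constructor
  · rintro ⟨v, hv, p, hp⟩
    exact ⟨v, by exact_mod_cast hv, v, rfl, p, hp⟩
  · rintro ⟨v, hvX, v', hv', p, hp⟩
    rcases hv' with rfl
    exact ⟨v', by exact_mod_cast hvX, p, hp⟩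

private lemma connected_induce_star {ι : Type} (T : SimpleGraph ι) (s : Set ι) (c : ι)
    (hc : c ∈ s) (h : ∀ a ∈ s, a = c ∨ T.Adj a c) : (T.induce s).Connected := by
  rw [SimpleGraph.connected_iff]
  have key : ∀ a : s, (T.induce s).Reachable a ⟨c, hc⟩ := by
    rintro ⟨a, ha⟩
    rcases h a ha with rfl | hadj
    · rfl
    · exact SimpleGraph.Adj.reachable (by exact hadj)
  exact ⟨fun a b => (key a).trans (key b).symm, ⟨⟨c, hc⟩⟩⟩

private lemma connected_induce_univ {ι : Type} (T : SimpleGraph ι) (h : T.Connected) :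
    (T.induce Set.univ).Connected :=
  SimpleGraph.Connected.map (induceUnivIso T).symm.toHom
    (induceUnivIso T).symm.toEquiv.surjective h

private lemma indep_card_bound {V : Type} [DecidableEq V] (G : SimpleGraph V) (X : Finset V)
    (f t : ℕ) (hX : X.card ≤ f)
    (hballs : ∀ v ∈ X, ∀ s : Finset V, ↑s ⊆ G.vertexBall {v} 1 →
      (↑s : Set V).Pairwise (fun a b => ¬ G.Adj a b) → s.card < t)
    (a b : V) (s : Finset V)
    (hind : (↑s : Set V).Pairwise (fun a b => ¬ G.Adj a b))
    (hs : ↑s ⊆ G.vertexBall (↑X) 1 ∪ ({a, b} : Set V)) : s.card ≤ f * (t - 1) + 2 := by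
  classical
  set sB := s.filter (fun u => u ∈ G.vertexBall (↑X) 1) with hsB
  have hsub : s ⊆ sB ∪ {a, b} := by
    intro u hu
    rcases hs hu with hB | hab
    · exact Finset.mem_union_left _ (Finset.mem_filter.mpr ⟨hu, hB⟩)
    · apply Finset.mem_union_right
      rcases hab with rfl | rfl
      · exact Finset.mem_insert_self _ _
      · exact Finset.mem_insert_of_mem (Finset.mem_singleton_self _)
  have hcard1 : s.card ≤ sB.card + 2 := by
    have h1 := Finset.card_le_card hsub
    have h2 := Finset.card_union_le sB ({a, b} : Finset V)
    have h3 : ({a, b} : Finset V).card ≤ 2 := by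
      have := Finset.card_insert_le a ({b} : Finset V)
      simp at this ⊢; omega
    omega
  let φ : V → V := fun u => if h : ∃ v ∈ X, u ∈ G.vertexBall {v} 1 then h.choose else u
  have hφ1 : ∀ u ∈ sB, φ u ∈ X := by
    intro u hu
    have hex := mem_ball_iff'.mp (Finset.mem_filter.mp hu).2
    simp only [φ, dif_pos hex]
    exact hex.choose_spec.1
  have hφ2 : ∀ u ∈ sB, u ∈ G.vertexBall {φ u} 1 := by
    intro u hu
    have hex := mem_ball_iff'.mp (Finset.mem_filter.mp hu).2
    simp only [φ, dif_pos hex]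
    exact hex.choose_spec.2
  have hfib := Finset.card_eq_sum_card_fiberwise hφ1
  have hbound : ∀ v ∈ X, (sB.filter (fun u => φ u = v)).card ≤ t - 1 := by
    intro v hv
    have hlt := hballs v hv (sB.filter (fun u => φ u = v)) ?_ ?_
    · omega
    · intro u hu
      have hu' := Finset.mem_filter.mp (by exact_mod_cast hu)
      have := hφ2 u hu'.1
      rwa [hu'.2] at this
    · refine hind.mono ?_
      intro u hu
      have hu' := Finset.mem_filter.mp (by exact_mod_cast hu)
      exact_mod_cast Finset.mem_filter.mp hu'.1 |>.1
  have hsum : sB.card ≤ X.card * (t - 1) := by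
    rw [hfib]
    calc ∑ v ∈ X, (sB.filter (fun u => φ u = v)).card
        ≤ ∑ _v ∈ X, (t - 1) := Finset.sum_le_sum hbound
      _ = X.card * (t - 1) := by rw [Finset.sum_const, smul_eq_mul]
  have : X.card * (t - 1) ≤ f * (t - 1) := Nat.mul_le_mul_right _ hX
  omega

section Main

variable {V : Type} [DecidableEq V] (G : SimpleGraph V) (X : Finset V)

private abbrev Fset : Set V := (G.vertexBall (↑X) 1)ᶜ

private abbrev Hgr : SimpleGraph ↥(Fset G X) := G.induce (Fset G X)

private noncomputable def upf : Option ↥(Fset G X) → Option ↥(Fset G X) := fun a =>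
  a.elim none (fun z => if groot (Hgr G X) z = z then none else some (gparent (Hgr G X) z))

private noncomputable def rankf : Option ↥(Fset G X) → ℕ := fun a =>
  a.elim 0 (fun z => (Hgr G X).dist z (groot (Hgr G X) z) + 1)

private noncomputable def bagf : Option ↥(Fset G X) → Set V := fun a =>
  a.elim (G.vertexBall (↑X) 1) (fun z => G.vertexBall (↑X) 1 ∪ {↑z, ↑(pvF (Hgr G X) z)})

private lemma upf_uniq : ∀ a, upf G X a = a → a = none := by
  rintro (_ | z) h
  · rfl
  · exfalso
    simp only [upf, Option.elim] at h
    by_cases hr : groot (Hgr G X) z = z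
    · rw [if_pos hr] at h; exact Option.some_ne_none _ h.symm
    · rw [if_neg hr] at h
      exact (gparent_adj (Hgr G X) hr).ne' (Option.some.inj h)

private lemma upf_dec : ∀ a, upf G X a ≠ a → rankf G X (upf G X a) < rankf G X a := by
  rintro (_ | z) h
  · exact absurd rfl h
  · simp only [upf, rankf, Option.elim]
    by_cases hr : groot (Hgr G X) z = z
    · rw [if_pos hr]; simp only [Option.elim]; omega
    · rw [if_neg hr]; simp only [Option.elim]
      have := gparent_dist (Hgr G X) hr
      omega

end Main


/-- If `G` has a tree-decomposition of independence number at most `w`,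
`G - B_G(X,1)` is a forest for a set `X` with `|X| ≤ f`, and every closed neighbourhood
`B_G(v,1)` of a vertex `v ∈ X` induces a subgraph of independence number less than `t`,
then `G` has a tree-decomposition of independence number at most `f·(t-1) + 2`. -/
theorem stmt_8 {V : Type} [Fintype V] [DecidableEq V] (G : SimpleGraph V)
    (w f t : ℕ) (ht : 1 ≤ t)
    (ι : Type) (D : TreeDecomp G ι) (hD : D.IndepNumLE w)
    (X : Finset V) (hX : X.card ≤ f)
    (hforest : (G.induce ((G.vertexBall (↑X) 1)ᶜ)).IsAcyclic)
    (hballs : ∀ v ∈ X, ∀ s : Finset V, ↑s ⊆ G.vertexBall {v} 1 →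
      (↑s : Set V).Pairwise (fun a b => ¬ G.Adj a b) → s.card < t) :
    ∃ (ι' : Type) (D' : TreeDecomp G ι'), D'.IndepNumLE (f * (t - 1) + 2) := by
  classical
  have hac : (Hgr G X).IsAcyclic := hforest
  set T := SimpleGraph.fromRel (fun a b => upf G X a = b) with hTdef
  have hTree : T.IsTree := isTree_of_up (upf G X) (rankf G X) none (upf_uniq G X) (upf_dec G X)
  refine ⟨Option ↥(Fset G X), ⟨T, hTree, bagf G X, ?_, ?_, ?_⟩, ?_⟩
  · -- covers
    intro v
    by_cases hv : v ∈ G.vertexBall (↑X) 1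
    · exact ⟨none, hv⟩
    · exact ⟨some ⟨v, hv⟩, Or.inr (Set.mem_insert _ _)⟩
  · -- coversEdge
    intro u v huv
    by_cases hu : u ∈ G.vertexBall (↑X) 1 <;> by_cases hv : v ∈ G.vertexBall (↑X) 1
    · exact ⟨none, hu, hv⟩
    · exact ⟨some ⟨v, hv⟩, Or.inl hu, Or.inr (Set.mem_insert _ _)⟩
    · exact ⟨some ⟨u, hu⟩, Or.inr (Set.mem_insert _ _), Or.inl hv⟩
    · have hH : (Hgr G X).Adj ⟨u, hu⟩ ⟨v, hv⟩ := huv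
      rcases forest_parent_or hac hH with hp | hp
      · refine ⟨some ⟨u, hu⟩, Or.inr (Set.mem_insert _ _), Or.inr ?_⟩
        rw [hp]
        exact Set.mem_insert_of_mem _ rfl
      · refine ⟨some ⟨v, hv⟩, Or.inr ?_, Or.inr (Set.mem_insert _ _)⟩
        rw [hp]
        exact Set.mem_insert_of_mem _ rfl
  · -- subtree
    intro x
    by_cases hx : x ∈ G.vertexBall (↑X) 1
    · have huniv : {i | x ∈ bagf G X i} = Set.univ := by
        apply Set.eq_univ_of_forall
        rintro (_ | z)
        · exact hx
        · exact Or.inl hx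
      rw [huniv]
      exact connected_induce_univ T hTree.isConnected
    · apply connected_induce_star T _ (some ⟨x, hx⟩) (Or.inr (Set.mem_insert _ _))
      rintro (_ | w) ha
      · exact absurd ha hx
      · rcases ha with hB | hmem
        · exact absurd hB hx
        · rcases hmem with hw | hw
          · left
            congr 1
            exact Subtype.ext hw.symm
          · have hxw : x = ↑(pvF (Hgr G X) w) := Set.mem_singleton_iff.mp hw
            have hwz : pvF (Hgr G X) w = ⟨x, hx⟩ := Subtype.ext hxw.symm
            by_cases hwzeq : w = (⟨x, hx⟩ : ↥(Fset G X))
            · left; rw [hwzeq]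
            · right
              rw [hTdef]
              refine (SimpleGraph.fromRel_adj _ _ _).mpr ⟨by simpa using hwzeq, Or.inl ?_⟩
              have hroot : groot (Hgr G X) w ≠ w := by
                intro hr
                exact hwzeq ((pvF_root hr).symm.trans hwz)
              simp only [upf, Option.elim, if_neg hroot]
              rw [← pvF_not_root hroot, hwz]
  · -- independence bound
    intro i s hs hind
    cases i with
    | none =>
      rcases s.eq_empty_or_nonempty with rfl | ⟨a, ha⟩
      · simp
      · refine indep_card_bound G X f t hX hballs a a s hind ?_
        intro u hu
        exact Set.mem_union_left _ (hs hu)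
    | some z =>
      exact indep_card_bound G X f t hX hballs (↑z) (↑(pvF (Hgr G X) z)) s hind hs
end

section
/- Let G be a graph obtained from a graph G₀ by subdividing every edge exactly twice. Then: (1) every collection of pairwise vertex-disjoint cycles of G is automatically an induced packing (no edges between distinct cycles); (2) G has an induced packing of k cycles if and only if G₀ has k vertex-disjoint cycles. -/
/-- The graph obtained from `G₀` by subdividing every edge exactly twice: each edge
`{u,v}` is replaced by the path `u - (u,v) - (v,u) - v`, where the two internal vertices
are the two darts of the edge. -/
def sub2 {V : Type} (G₀ : SimpleGraph V) : SimpleGraph (V ⊕ G₀.Dart) where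
  Adj x y :=
    match x, y with
    | Sum.inl _, Sum.inl _ => False
    | Sum.inl u, Sum.inr d => d.toProd.1 = u
    | Sum.inr d, Sum.inl u => d.toProd.1 = u
    | Sum.inr d, Sum.inr d' => d' = d.symm
  symm := by
    constructor
    rintro (u | d) (v | d') h
    · exact h
    · exact h
    · exact h
    · change d' = d.symm at h
      change d = d'.symm
      rw [h, SimpleGraph.Dart.symm_symm]
  loopless := by
    constructor
    rintro (u | d) h
    · exact h
    · rcases d with ⟨⟨a, b⟩, hadj⟩
      change _ = SimpleGraph.Dart.symm _ at h
      simp only [SimpleGraph.Dart.symm, SimpleGraph.Dart.mk.injEq, Prod.swap_prod_mk,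
        Prod.mk.injEq] at h
      exact G₀.loopless.irrefl a (h.1 ▸ hadj)

open SimpleGraph Walk Sum in
lemma exists_two_nbrs_base {W : Type} {G : SimpleGraph W} {x : W} (c : G.Walk x x)
    (hc : c.IsCycle) :
    ∃ y z, y ≠ z ∧ G.Adj x y ∧ G.Adj x z ∧ y ∈ c.support ∧ z ∈ c.support := by
  cases c with
  | nil => exact absurd rfl hc.ne_nil
  | @cons _ y _ h q =>
    obtain ⟨hq, he⟩ := (Walk.cons_isCycle_iff q h).mp hc
    cases hq' : q.reverse with
    | nil =>
      have : q = Walk.nil := by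
        have := congrArg Walk.reverse hq'
        simpa using this
      subst this
      have := hc.three_le_length
      simp at this
    | @cons _ z _ hz r' =>
      have hq2 : q = r'.reverse.append (Walk.cons hz.symm Walk.nil) := by
        have := congrArg Walk.reverse hq'
        simpa [Walk.reverse_cons] using this
      have hzx : s(z, x) ∈ q.edges := by
        rw [hq2, Walk.edges_append]
        simp
      refine ⟨y, z, ?_, h, hz, ?_, ?_⟩
      · rintro rfl
        exact he (Sym2.eq_swap ▸ hzx)
      · simp
      · have : z ∈ q.support := by
          have : z ∈ q.reverse.support := by rw [hq']; simp
          simpa using this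
        simp [this]
open SimpleGraph Walk Sum in
lemma exists_two_nbrs {W : Type} {G : SimpleGraph W} {b x : W} (c : G.Walk b b)
    (hc : c.IsCycle) (hx : x ∈ c.support) :
    ∃ y z, y ≠ z ∧ G.Adj x y ∧ G.Adj x z ∧ y ∈ c.support ∧ z ∈ c.support := by
  classical
  obtain ⟨y, z, hyz, hay, haz, hy, hz⟩ := exists_two_nbrs_base (c.rotate x hx) (hc.rotate hx)
  have hmem : ∀ w, w ∈ (c.rotate x hx).support → w ∈ c.support := by
    intro w hw
    rw [Walk.support_eq_cons, List.mem_cons] at hw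
    rcases hw with rfl | hw
    · exact hx
    · exact List.mem_of_mem_tail ((Walk.support_rotate c x hx).mem_iff.mp hw)
  exact ⟨y, z, hyz, hay, haz, hmem y hy, hmem z hz⟩

open SimpleGraph Walk Sum in
lemma mem_of_inr_mem {V : Type} {G₀ : SimpleGraph V} {b : V ⊕ G₀.Dart}
    {c : (sub2 G₀).Walk b b} (hc : c.IsCycle) {d : G₀.Dart} (hd : Sum.inr d ∈ c.support) :
    Sum.inl d.fst ∈ c.support ∧ Sum.inr d.symm ∈ c.support := by
  obtain ⟨y, z, hyz, hay, haz, hy, hz⟩ := exists_two_nbrs c hc hd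
  have hclass : ∀ w, (sub2 G₀).Adj (Sum.inr d) w → w = Sum.inl d.fst ∨ w = Sum.inr d.symm := by
    rintro (u | d') h
    · left
      have : d.toProd.1 = u := h
      rw [this]
    · right
      have : d' = d.symm := h
      rw [this]
  rcases hclass y hay with rfl | rfl <;> rcases hclass z haz with rfl | rfl
  · exact absurd rfl hyz
  · exact ⟨hy, hz⟩
  · exact ⟨hz, hy⟩
  · exact absurd rfl hyz

open SimpleGraph Walk Sum in
lemma part1 {V : Type} {G₀ : SimpleGraph V} {a b : V ⊕ G₀.Dart}
    (c₁ : (sub2 G₀).Walk a a) (c₂ : (sub2 G₀).Walk b b)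
    (h₁ : c₁.IsCycle) (h₂ : c₂.IsCycle) (hdisj : ∀ x ∈ c₁.support, x ∉ c₂.support) :
    ∀ x ∈ c₁.support, ∀ y ∈ c₂.support, ¬ (sub2 G₀).Adj x y := by
  rintro (u | d) hx (w | d') hy hadj
  · exact hadj
  · have h1 : d'.toProd.1 = u := hadj
    have := (mem_of_inr_mem h₂ hy).1
    rw [h1] at this
    exact hdisj _ hx this
  · have h1 : d.toProd.1 = w := hadj
    have := (mem_of_inr_mem h₁ hx).1
    rw [h1] at this
    exact hdisj _ this hy
  · have h1 : d' = d.symm := hadj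
    have := (mem_of_inr_mem h₁ hx).2
    rw [← h1] at this
    exact hdisj _ this hy
open SimpleGraph Walk Sum in
/-- the middle dart of the subdivided edge -/
def fdart {V : Type} {G₀ : SimpleGraph V} (d : G₀.Dart) : (sub2 G₀).Dart :=
  ⟨(Sum.inr d, Sum.inr d.symm), rfl⟩

open SimpleGraph Walk Sum in
lemma unsub {V : Type} {G₀ : SimpleGraph V} :
    ∀ (n : ℕ) (x y : V ⊕ G₀.Dart) (w : (sub2 G₀).Walk x y), w.length = n → w.IsTrail →
    ∀ (u v : V), x = Sum.inl u → y = Sum.inl v →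
    ∃ w' : G₀.Walk u v, w.length = 3 * w'.length ∧
      w'.support.map Sum.inl = w.support.filter (·.isLeft) ∧
      (w'.darts.map fdart).Sublist w.darts := by
  intro n
  induction n using Nat.strong_induction_on with
  | _ n IH =>
  intro x y w hlen htrail u v hx hy
  subst hx hy
  cases w with
  | nil =>
    exact ⟨Walk.nil, by simp, rfl, by simp [Walk.darts]⟩
  | @cons _ m _ h rest =>
    cases m with
    | inl u2 => exact absurd h (fun h => h)
    | inr d =>
      have hd : d.toProd.1 = u := h
      cases rest with
      | @cons _ m2 _ h2 rest2 =>
        cases m2 with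
        | inl u2 =>
          -- backtrack: contradiction with trail
          have hu2 : d.toProd.1 = u2 := h2
          have : u2 = u := by rw [← hu2, hd]
          subst this
          exfalso
          have hnd := htrail.edges_nodup
          simp only [Walk.edges_cons, List.nodup_cons, List.mem_cons] at hnd
          exact hnd.1 (Or.inl (Sym2.eq_swap))
        | inr d2 =>
          have hd2 : d2 = d.symm := h2
          subst hd2
          cases rest2 with
          | @cons _ m3 _ h3 rest3 =>
            cases m3 with
            | inr d3 =>
              have hd3 : d3 = d.symm.symm := h3
              rw [SimpleGraph.Dart.symm_symm] at hd3
              subst hd3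
              exfalso
              have hnd := htrail.of_cons.edges_nodup
              simp only [Walk.edges_cons, List.nodup_cons, List.mem_cons] at hnd
              exact hnd.1 (Or.inl (Sym2.eq_swap))
            | inl u3 =>
              have hu3 : d.symm.toProd.1 = u3 := h3
              have hu3' : d.toProd.2 = u3 := hu3
              subst hu3'
              subst hd
              simp only [Walk.length_cons] at hlen
              obtain ⟨w'', hl, hsup, hdarts⟩ :=
                IH rest3.length (by omega) _ _ rest3 rfl
                  htrail.of_cons.of_cons.of_cons d.toProd.2 v rfl rfl
              refine ⟨Walk.cons d.adj w'', ?_, ?_, ?_⟩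
              · simp only [Walk.length_cons, hl]; ring
              · simp only [Walk.support_cons, List.map_cons, List.filter_cons, hsup]
                simp [Sum.isLeft]
              · simp only [Walk.darts_cons, List.map_cons]
                have hfd : fdart ⟨(d.toProd.1, d.toProd.2), d.adj⟩
                    = (⟨(Sum.inr d, Sum.inr d.symm), rfl⟩ : (sub2 G₀).Dart) := rfl
                rw [hfd]
                exact ((hdarts.cons _).cons₂ _).cons _
open SimpleGraph Walk Sum in
lemma unsub_cycle {V : Type} {G₀ : SimpleGraph V} {u : V}
    (c : (sub2 G₀).Walk (Sum.inl u) (Sum.inl u)) (hc : c.IsCycle) :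
    ∃ c' : G₀.Walk u u, c'.IsCycle ∧ ∀ v ∈ c'.support, Sum.inl v ∈ c.support := by
  obtain ⟨w', hlen, hsup, hdarts⟩ :=
    unsub c.length _ _ c rfl hc.isTrail u u rfl rfl
  refine ⟨w', ⟨⟨⟨?_⟩, ?_⟩, ?_⟩, ?_⟩
  · -- edges nodup
    have hmap : ((w'.darts.map fdart).map SimpleGraph.Dart.edge).Sublist c.edges :=
      hdarts.map _
    have hnd : ((w'.darts.map fdart).map SimpleGraph.Dart.edge).Nodup :=
      hmap.nodup hc.isTrail.edges_nodup
    rw [List.map_map] at hnd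
    show (w'.darts.map SimpleGraph.Dart.edge).Nodup
    rw [List.Nodup, List.pairwise_map] at hnd ⊢
    refine hnd.imp ?_
    intro d₁ d₂ hne heq
    apply hne
    rcases (SimpleGraph.dart_edge_eq_iff d₁ d₂).mp heq with rfl | rfl
    · rfl
    · show ((fdart d₂.symm).edge : Sym2 (V ⊕ G₀.Dart)) = (fdart d₂).edge
      show s(Sum.inr d₂.symm, Sum.inr d₂.symm.symm) = s(Sum.inr d₂, Sum.inr d₂.symm)
      rw [SimpleGraph.Dart.symm_symm, Sym2.eq_swap]
  · -- ne nil
    intro hnil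
    have h3 := hc.three_le_length
    rw [hlen] at h3
    have : w'.length = 0 := by rw [hnil]; rfl
    omega
  · -- support tail nodup
    have htail : w'.support.tail.map Sum.inl = c.support.tail.filter (·.isLeft) := by
      have h1 := hsup
      rw [Walk.support_eq_cons w', Walk.support_eq_cons c] at h1
      simp only [List.map_cons, List.filter_cons, Sum.isLeft_inl, ↓reduceIte, List.cons.injEq] at h1
      exact h1.2
    have hnd : (w'.support.tail.map (Sum.inl : V → V ⊕ G₀.Dart)).Nodup := by
      rw [htail]
      exact hc.support_nodup.filter _
    exact hnd.of_map _
  · intro v hv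
    have hm : (Sum.inl v : V ⊕ G₀.Dart) ∈ w'.support.map (Sum.inl : V → V ⊕ G₀.Dart) :=
      List.mem_map_of_mem hv
    rw [hsup] at hm
    exact List.mem_of_mem_filter hm

open SimpleGraph Walk Sum in
lemma unsub_cycle' {V : Type} {G₀ : SimpleGraph V} (x : V ⊕ G₀.Dart)
    (c : (sub2 G₀).Walk x x) (hc : c.IsCycle) :
    ∃ (u : V) (c' : G₀.Walk u u), c'.IsCycle ∧ ∀ v ∈ c'.support, Sum.inl v ∈ c.support := by
  classical
  cases x with
  | inl u =>
    obtain ⟨c', h1, h2⟩ := unsub_cycle c hc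
    exact ⟨u, c', h1, h2⟩
  | inr d =>
    have hmem : Sum.inl d.fst ∈ c.support :=
      (mem_of_inr_mem hc c.start_mem_support).1
    obtain ⟨c', h1, h2⟩ := unsub_cycle (c.rotate _ hmem) (hc.rotate hmem)
    refine ⟨d.fst, c', h1, fun v hv => ?_⟩
    have hw := h2 v hv
    rw [Walk.support_eq_cons (c.rotate _ hmem), List.mem_cons] at hw
    rcases hw with heq | hw
    · rw [heq]; exact hmem
    · exact List.mem_of_mem_tail ((Walk.support_rotate c _ hmem).mem_iff.mp hw)
open SimpleGraph Walk Sum in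
/-- subdivide a walk of `G₀` into a walk of `sub2 G₀` -/
def subWalk {V : Type} {G₀ : SimpleGraph V} : ∀ {u v : V},
    G₀.Walk u v → (sub2 G₀).Walk (Sum.inl u) (Sum.inl v)
  | _, _, Walk.nil => Walk.nil
  | u, v, @Walk.cons _ _ _ w _ h p =>
      Walk.cons (show (sub2 G₀).Adj (Sum.inl u) (Sum.inr ⟨(u, w), h⟩) from rfl)
        (Walk.cons (show (sub2 G₀).Adj (Sum.inr ⟨(u, w), h⟩) (Sum.inr ⟨(w, u), h.symm⟩) from rfl)
          (Walk.cons (show (sub2 G₀).Adj (Sum.inr ⟨(w, u), h.symm⟩) (Sum.inl w) from rfl)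
            (subWalk p)))

open SimpleGraph Walk Sum in
lemma subWalk_support {V : Type} {G₀ : SimpleGraph V} : ∀ {u v : V} (p : G₀.Walk u v),
    ∀ x ∈ (subWalk p).support,
      (∃ a, x = Sum.inl a ∧ a ∈ p.support) ∨
      (∃ d, x = Sum.inr d ∧ d.fst ∈ p.support ∧ d.snd ∈ p.support ∧
        (d ∈ p.darts ∨ d.symm ∈ p.darts)) := by
  intro u v p
  induction p with
  | nil =>
    intro x hx
    simp only [subWalk, Walk.support_nil, List.mem_singleton] at hx
    subst hx
    exact Or.inl ⟨_, rfl, by simp⟩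
  | @cons a b c h p ih =>
    intro x hx
    simp only [subWalk, Walk.support_cons, List.mem_cons] at hx
    rcases hx with rfl | rfl | rfl | hx
    · exact Or.inl ⟨a, rfl, by simp⟩
    · refine Or.inr ⟨⟨(a, b), h⟩, rfl, by simp, ?_, Or.inl (by simp [Walk.darts_cons])⟩
      simp [Walk.support_cons]
    · refine Or.inr ⟨⟨(b, a), h.symm⟩, rfl, by simp [Walk.support_cons], by simp, ?_⟩
      right
      have : (⟨(b, a), h.symm⟩ : G₀.Dart).symm = ⟨(a, b), h⟩ := rfl
      rw [this]
      simp [Walk.darts_cons]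
    · rcases ih x hx with ⟨a', rfl, ha⟩ | ⟨d, rfl, h1, h2, h3⟩
      · exact Or.inl ⟨a', rfl, by simp [Walk.support_cons, ha]⟩
      · refine Or.inr ⟨d, rfl, by simp [Walk.support_cons, h1], by simp [Walk.support_cons, h2], ?_⟩
        rcases h3 with h3 | h3
        · exact Or.inl (by simp [Walk.darts_cons, h3])
        · exact Or.inr (by simp [Walk.darts_cons, h3])
open SimpleGraph Walk Sum in
lemma subWalk_isPath {V : Type} {G₀ : SimpleGraph V} : ∀ {u v : V} {p : G₀.Walk u v},
    p.IsPath → (subWalk p).IsPath := by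
  intro u v p hp
  induction p with
  | nil => simp [subWalk]
  | @cons a b c h p ih =>
    rw [Walk.cons_isPath_iff] at hp
    obtain ⟨hp, hna⟩ := hp
    show ((Walk.cons _ (Walk.cons _ (Walk.cons _ (subWalk p))))).IsPath
    rw [Walk.cons_isPath_iff, Walk.cons_isPath_iff, Walk.cons_isPath_iff]
    refine ⟨⟨⟨ih hp, ?_⟩, ?_⟩, ?_⟩
    · -- inr (b,a) ∉ (subWalk p).support
      intro hmem
      rcases subWalk_support p _ hmem with ⟨a', ha', _⟩ | ⟨d, hd, h1, h2, _⟩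
      · exact absurd ha' (by simp)
      · have : d = ⟨(b, a), h.symm⟩ := by exact Sum.inr.inj hd.symm ▸ rfl
        rw [Sum.inr.injEq] at hd
        rw [← hd] at h2
        exact hna h2
    · -- inr (a,b) ∉ support of cons _ (subWalk p)
      simp only [Walk.support_cons, List.mem_cons]
      rintro (heq | hmem)
      · rw [Sum.inr.injEq, SimpleGraph.Dart.ext_iff, Prod.ext_iff] at heq
        exact h.ne heq.1
      · rcases subWalk_support p _ hmem with ⟨a', ha', _⟩ | ⟨d, hd, h1, h2, _⟩
        · exact absurd ha' (by simp)
        · rw [Sum.inr.injEq] at hd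
          rw [← hd] at h1
          exact hna h1
    · -- inl a ∉ support of cons _ cons _ (subWalk p)
      simp only [Walk.support_cons, List.mem_cons]
      rintro (heq | heq | hmem)
      · exact absurd heq (by simp)
      · exact absurd heq (by simp)
      · rcases subWalk_support p _ hmem with ⟨a', ha', hmem'⟩ | ⟨d, hd, _⟩
        · rw [Sum.inl.injEq] at ha'
          rw [← ha'] at hmem'
          exact hna hmem'
        · exact absurd hd (by simp)

open SimpleGraph Walk Sum in
lemma subWalk_isCycle {V : Type} {G₀ : SimpleGraph V} {u : V} {c : G₀.Walk u u}
    (hc : c.IsCycle) : (subWalk c).IsCycle := by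
  cases c with
  | nil => exact absurd rfl hc.ne_nil
  | @cons _ b _ h p =>
    obtain ⟨hp, he⟩ := (Walk.cons_isCycle_iff p h).mp hc
    show ((Walk.cons _ (Walk.cons _ (Walk.cons _ (subWalk p))))).IsCycle
    rw [Walk.cons_isCycle_iff]
    constructor
    · rw [Walk.cons_isPath_iff, Walk.cons_isPath_iff]
      refine ⟨⟨subWalk_isPath hp, ?_⟩, ?_⟩
      · -- inr (b,u) ∉ (subWalk p).support
        intro hmem
        rcases subWalk_support p _ hmem with ⟨a', ha', _⟩ | ⟨d, hd, h1, h2, h3⟩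
        · exact absurd ha' (by simp)
        · rw [Sum.inr.injEq] at hd
          rw [← hd] at h3
          rcases h3 with h3 | h3
          · have : (⟨(b, u), h.symm⟩ : G₀.Dart).edge ∈ p.edges :=
              List.mem_map_of_mem (f := SimpleGraph.Dart.edge) h3
            rw [show (⟨(b, u), h.symm⟩ : G₀.Dart).edge = s(b, u) from rfl, Sym2.eq_swap] at this
            exact he this
          · have : (⟨(b, u), h.symm⟩ : G₀.Dart).symm.edge ∈ p.edges :=
              List.mem_map_of_mem (f := SimpleGraph.Dart.edge) h3
            rw [show (⟨(b, u), h.symm⟩ : G₀.Dart).symm.edge = s(u, b) from rfl] at this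
            exact he this
      · -- inr (u,b) ∉ support of cons _ (subWalk p)
        simp only [Walk.support_cons, List.mem_cons]
        rintro (heq | hmem)
        · rw [Sum.inr.injEq, SimpleGraph.Dart.ext_iff, Prod.ext_iff] at heq
          exact h.ne heq.1
        · rcases subWalk_support p _ hmem with ⟨a', ha', _⟩ | ⟨d, hd, h1, h2, h3⟩
          · exact absurd ha' (by simp)
          · rw [Sum.inr.injEq] at hd
            rw [← hd] at h3
            rcases h3 with h3 | h3
            · exact he (List.mem_map_of_mem (f := SimpleGraph.Dart.edge) h3)
            · have : (⟨(u, b), h⟩ : G₀.Dart).symm.edge ∈ p.edges :=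
                List.mem_map_of_mem (f := SimpleGraph.Dart.edge) h3
              rw [show (⟨(u, b), h⟩ : G₀.Dart).symm.edge = s(b, u) from rfl, Sym2.eq_swap] at this
              exact he this
    · -- first edge not in rest
      simp only [Walk.edges_cons, List.mem_cons]
      rintro (heq | heq | hmem)
      · rw [Sym2.eq, Sym2.rel_iff'] at heq
        rcases heq with ⟨h1, h2⟩ | ⟨h1, h2⟩
      · rw [Sym2.eq, Sym2.rel_iff'] at heq
        rcases heq with ⟨h1, h2⟩ | ⟨h1, h2⟩
        exact G₀.loopless.irrefl _ h
      · have hmem' : (Sum.inr (⟨(u, b), h⟩ : G₀.Dart) : V ⊕ G₀.Dart) ∈ (subWalk p).support :=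
          Walk.snd_mem_support_of_mem_edges _ hmem
        rcases subWalk_support p _ hmem' with ⟨a', ha', _⟩ | ⟨d, hd, h1, h2, h3⟩
        · exact absurd ha' (by simp)
        · rw [Sum.inr.injEq] at hd
          rw [← hd] at h3
          rcases h3 with h3 | h3
          · exact he (List.mem_map_of_mem (f := SimpleGraph.Dart.edge) h3)
          · have : (⟨(u, b), h⟩ : G₀.Dart).symm.edge ∈ p.edges :=
              List.mem_map_of_mem (f := SimpleGraph.Dart.edge) h3
            rw [show (⟨(u, b), h⟩ : G₀.Dart).symm.edge = s(b, u) from rfl, Sym2.eq_swap] at this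
            exact he this
/-- For the double subdivision `G` of a graph `G₀`:
(1) any family of pairwise vertex-disjoint cycles of `G` has no edges between distinct
cycles (it is automatically an induced packing); and
(2) `G` has an induced packing of `k` cycles iff `G₀` has `k` vertex-disjoint cycles. -/
theorem stmt_17 {V : Type} (G₀ : SimpleGraph V) (k : ℕ) :
    (∀ (a b : V ⊕ G₀.Dart) (c₁ : (sub2 G₀).Walk a a) (c₂ : (sub2 G₀).Walk b b),
        c₁.IsCycle → c₂.IsCycle → (∀ x ∈ c₁.support, x ∉ c₂.support) →
        ∀ x ∈ c₁.support, ∀ y ∈ c₂.support, ¬ (sub2 G₀).Adj x y) ∧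
    ((∃ (a : Fin k → V ⊕ G₀.Dart) (c : ∀ i, (sub2 G₀).Walk (a i) (a i)),
        (∀ i, (c i).IsCycle) ∧
        (∀ i j, i ≠ j → ∀ x ∈ (c i).support, x ∉ (c j).support) ∧
        (∀ i j, i ≠ j →
          ∀ x ∈ (c i).support, ∀ y ∈ (c j).support, ¬ (sub2 G₀).Adj x y)) ↔
      (∃ (a : Fin k → V) (c : ∀ i, G₀.Walk (a i) (a i)),
        (∀ i, (c i).IsCycle) ∧
        (∀ i j, i ≠ j → ∀ x ∈ (c i).support, x ∉ (c j).support))) := by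
  constructor
  · intro a b c₁ c₂ h₁ h₂ hdisj
    exact part1 c₁ c₂ h₁ h₂ hdisj
  constructor
  · rintro ⟨a, c, hcyc, hdisj, -⟩
    choose u c' hcy hsub using fun i => unsub_cycle' (a i) (c i) (hcyc i)
    refine ⟨u, c', hcy, ?_⟩
    intro i j hij x hxi hxj
    exact hdisj i j hij _ (hsub i x hxi) (hsub j x hxj)
  · rintro ⟨a, c, hcyc, hdisj⟩
    refine ⟨fun i => Sum.inl (a i), fun i => subWalk (c i), fun i => subWalk_isCycle (hcyc i),
      ?_, ?_⟩
    · intro i j hij x hxi hxj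
      rcases subWalk_support (c i) x hxi with ⟨v, rfl, hvi⟩ | ⟨d, rfl, hfi, -, -⟩
      · rcases subWalk_support (c j) _ hxj with ⟨v', hv', hvj⟩ | ⟨d, hd, -⟩
        · rw [Sum.inl.injEq] at hv'
          rw [hv'] at hvi
          exact hdisj i j hij _ hvi hvj
        · exact absurd hd (by simp)
      · rcases subWalk_support (c j) _ hxj with ⟨v', hv', -⟩ | ⟨d', hd', hfj, -, -⟩
        · exact absurd hv' (by simp)
        · rw [Sum.inr.injEq] at hd'
          rw [← hd'] at hfj
          exact hdisj i j hij _ hfi hfj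
    · intro i j hij
      apply part1 _ _ (subWalk_isCycle (hcyc i)) (subWalk_isCycle (hcyc j))
      intro x hxi hxj
      rcases subWalk_support (c i) x hxi with ⟨v, rfl, hvi⟩ | ⟨d, rfl, hfi, -, -⟩
      · rcases subWalk_support (c j) _ hxj with ⟨v', hv', hvj⟩ | ⟨d, hd, -⟩
        · rw [Sum.inl.injEq] at hv'
          rw [hv'] at hvi
          exact hdisj i j hij _ hvi hvj
        · exact absurd hd (by simp)
      · rcases subWalk_support (c j) _ hxj with ⟨v', hv', -⟩ | ⟨d', hd', hfj, -, -⟩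
        · exact absurd hv' (by simp)
        · rw [Sum.inr.injEq] at hd'
          rw [← hd'] at hfj
          exact hdisj i j hij _ hfi hfj
end

section
/- Let G be a cubic graph, let C be a shortest cycle of G with |V(C)| ≥ 5 and |V(G)| ≥ 7. Then the graph G' = G - V(C) has minimum degree at least 2 and is nonempty, hence contains a cycle. -/
open SimpleGraph

namespace StmtAux

variable {V : Type} {G : SimpleGraph V}

/-- In a path, any edge incident to the start vertex is the first edge. -/
lemma path_start_edge {a w u : V} (p : G.Walk a w) (hp : p.IsPath)
    (h : s(a, u) ∈ p.edges) : u = p.getVert 1 := by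
  cases p with
  | nil => simp at h
  | cons hadj q =>
    rw [Walk.edges_cons, List.mem_cons] at h
    rcases h with h | h
    · rw [Sym2.eq_iff] at h
      rcases h with ⟨-, rfl⟩ | ⟨h1, rfl⟩
      · simp [Walk.getVert_cons_succ, Walk.getVert_zero]
      · exact absurd h1 hadj.ne
    · exact absurd (Walk.fst_mem_support_of_mem_edges q h)
        ((Walk.cons_isPath_iff _ _).mp hp).2

lemma getVert_one_append {u v w : V} (p : G.Walk u v) (q : G.Walk v w)
    (h : p.length ≠ 0) : (p.append q).getVert 1 = p.getVert 1 := by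
  cases p with
  | nil => simp at h
  | cons hadj r =>
    simp [Walk.cons_append, Walk.getVert_cons_succ, Walk.getVert_zero]

lemma end_mem_tail {u v : V} (p : G.Walk u v) (h : ¬ p.Nil) :
    v ∈ p.support.tail := by
  cases p with
  | nil => simp at h
  | cons hadj q => simp

lemma mem_support_iff_mem_tail {u y : V} (p : G.Walk u u) (h : ¬ p.Nil) :
    y ∈ p.support ↔ y ∈ p.support.tail := by
  constructor
  · intro hy
    rw [p.support_eq_cons, List.mem_cons] at hy
    rcases hy with rfl | hy
    · exact end_mem_tail p h
    · exact hy
  · intro hy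
    rw [p.support_eq_cons]
    exact List.mem_cons_of_mem _ hy

lemma length_rotate [DecidableEq V] {u v : V} (c : G.Walk v v) (h : u ∈ c.support) :
    (c.rotate u h).length = c.length := by
  rw [Walk.rotate, Walk.length_append, Nat.add_comm, ← Walk.length_append,
    Walk.take_spec]

lemma mem_support_rotate_iff [DecidableEq V] {u v y : V} (c : G.Walk v v)
    (hc : ¬ c.Nil) (h : u ∈ c.support) (hr : ¬ (c.rotate u h).Nil) :
    y ∈ (c.rotate u h).support ↔ y ∈ c.support := by
  rw [mem_support_iff_mem_tail _ hr, mem_support_iff_mem_tail _ hc,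
    (Walk.support_rotate c u h).perm.mem_iff]

lemma concat_isPath {u v w : V} {p : G.Walk u v} (hp : p.IsPath)
    (hadj : G.Adj v w) (hw : w ∉ p.support) : (p.concat hadj).IsPath := by
  rw [Walk.isPath_def, Walk.support_concat]
  rw [Walk.isPath_def] at hp
  simp [List.nodup_append, hp]
  exact fun a ha h => hw (h ▸ ha)

/-- `takeUntil` and `dropUntil` of a cycle at a vertex other than the base point
are paths. -/
lemma cycle_takeUntil_isPath [DecidableEq V] {x b : V} (c : G.Walk x x)
    (hc : c.IsCycle) (hb : b ∈ c.support) (hbx : b ≠ x) :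
    (c.takeUntil b hb).IsPath ∧ (c.dropUntil b hb).IsPath := by
  cases c with
  | nil => exact absurd hc Walk.IsCycle.not_of_nil
  | @cons _ y _ hadj q =>
    have hq : q.IsPath := by
      rw [Walk.isPath_def]
      have := ((Walk.isCycle_def _).mp hc).2.2
      simpa using this
    have hb' : b ∈ q.support := by
      rcases hb with _ | hb
      · exact absurd rfl hbx
      · assumption
    have htake : (Walk.cons hadj q).takeUntil b hb
        = Walk.cons hadj (q.takeUntil b hb') := by
      simp only [Walk.takeUntil]
      rw [dif_neg (Ne.symm hbx)]
    have hdrop : (Walk.cons hadj q).dropUntil b hb = q.dropUntil b hb' := by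
      simp only [Walk.dropUntil]
      rw [dif_neg (Ne.symm hbx)]
    constructor
    · rw [htake]
      refine (Walk.cons_isPath_iff _ _).mpr ⟨hq.takeUntil hb', ?_⟩
      intro hxmem
      -- x is the end of q; it lies in the tail of the dropUntil part
      have hspec := q.take_spec hb'
      have hnodup : q.support.Nodup := (Walk.isPath_def _).mp hq
      have hnodup' : ((q.takeUntil b hb').support
          ++ (q.dropUntil b hb').support.tail).Nodup := by
        rw [← Walk.support_append, hspec]; exact hnodup
      have hdnil : ¬ (q.dropUntil b hb').Nil := by
        intro hnil
        exact hbx (Walk.Nil.eq hnil)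
      have hxtail : x ∈ (q.dropUntil b hb').support.tail :=
        end_mem_tail _ hdnil
      exact (List.disjoint_of_nodup_append hnodup') hxmem hxtail
    · rw [hdrop]
      exact hq.dropUntil hb'

end StmtAux

open StmtAux

/-- Delete a set of vertices from a graph, keeping the same vertex type. -/
def SimpleGraph.deleteSet {V : Type} (G : SimpleGraph V) (A : Set V) : SimpleGraph V where
  Adj a b := G.Adj a b ∧ a ∉ A ∧ b ∉ A
  symm := ⟨fun _ _ h => ⟨h.1.symm, h.2.2, h.2.1⟩⟩
  loopless := ⟨fun a h => G.loopless.irrefl a h.1⟩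

namespace StmtAux

lemma deleteSet_end_not_mem {V : Type} {G : SimpleGraph V} {A : Set V} :
    ∀ {u w : V} (p : (G.deleteSet A).Walk u w), p.length ≠ 0 → w ∉ A
  | _, _, .nil, h => absurd rfl h
  | _, _, .cons hadj q, _ => by
    rcases Nat.eq_zero_or_pos q.length with h0 | hpos
    · have := SimpleGraph.Walk.eq_of_length_eq_zero h0
      exact this ▸ hadj.2.2
    · exact deleteSet_end_not_mem q (Nat.pos_iff_ne_zero.mp hpos)

/-- Key lemma: a vertex outside a shortest cycle `c` (of length ≥ 5) cannot have two
distinct neighbours on `c`. -/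
lemma no_two_nbrs {V : Type} [DecidableEq V] {G : SimpleGraph V} {x : V}
    (c : G.Walk x x) (hc : c.IsCycle)
    (hshort : ∀ (y : V) (c' : G.Walk y y), c'.IsCycle → c.length ≤ c'.length)
    (hlen : 5 ≤ c.length) {v a b : V} (hv : v ∉ c.support)
    (hva : G.Adj v a) (hvb : G.Adj v b) (hab : a ≠ b)
    (ha : a ∈ c.support) (hb : b ∈ c.support) : False := by
  -- helper: a path between two cycle vertices, short enough, gives a shorter cycle
  have sq : ∀ (a' b' : V), G.Adj v a' → G.Adj v b' → a' ≠ b' →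
      ∀ (p : G.Walk a' b'), p.IsPath → v ∉ p.support →
      p.length + 2 < c.length → False := by
    intro a' b' hva' hvb' hab' p hp hvp hl
    have hcandcyc : (Walk.cons hva' (p.concat hvb'.symm)).IsCycle := by
      rw [Walk.cons_isCycle_iff]
      refine ⟨concat_isPath hp hvb'.symm hvp, ?_⟩
      intro hmem
      rw [Walk.edges_concat, List.concat_eq_append, List.mem_append] at hmem
      rcases hmem with hmem | hmem
      · exact hvp (Walk.fst_mem_support_of_mem_edges p hmem)
      · rw [List.mem_singleton, Sym2.eq_iff] at hmem
        rcases hmem with ⟨rfl, rfl⟩ | ⟨-, h2⟩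
        · exact hab' rfl
        · exact hab' h2
    have := hshort v _ hcandcyc
    rw [Walk.length_cons, Walk.length_concat] at this
    omega
  -- rotate the cycle to start at a
  set d := c.rotate a ha with hd
  have hdcyc : d.IsCycle := hc.rotate ha
  have hdlen : d.length = c.length := length_rotate c ha
  have hcnil : ¬ c.Nil := hc.not_nil
  have hdnil : ¬ d.Nil := hdcyc.not_nil
  have hmemd : ∀ y, y ∈ d.support ↔ y ∈ c.support :=
    fun y => mem_support_rotate_iff c hcnil ha hdnil
  have hbd : b ∈ d.support := (hmemd b).mpr hb
  obtain ⟨hptake, hpdrop⟩ := cycle_takeUntil_isPath d hdcyc hbd hab.symm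
  set p := d.takeUntil b hbd with hp
  set q := d.dropUntil b hbd with hq
  have hsum : p.length + q.length = c.length := by
    rw [← hdlen, ← Walk.length_append, Walk.take_spec]
  have hvp : v ∉ p.support := fun h =>
    hv ((hmemd v).mp (d.support_takeUntil_subset hbd h))
  have hvq : v ∉ q.support := fun h =>
    hv ((hmemd v).mp (d.support_dropUntil_subset hbd h))
  rcases Nat.lt_or_ge p.length 3 with hp3 | hp3
  · exact sq a b hva hvb hab p hptake hvp (by omega)
  · exact sq b a hvb hva hab.symm q hpdrop hvq (by omega)

end StmtAux

/-- Let `G` be a cubic graph on at least `7` vertices and `C` a shortest cycle of `G` of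
length at least `5`. Then `G' = G - V(C)` is nonempty, has minimum degree at least `2`,
and hence contains a cycle. -/
theorem stmt_18 {V : Type} [Fintype V] [DecidableEq V] (G : SimpleGraph V)
    [DecidableRel G.Adj]
    (hcubic : ∀ v : V, G.degree v = 3)
    (hcard : 7 ≤ Fintype.card V)
    {x : V} (c : G.Walk x x) (hc : c.IsCycle)
    (hshort : ∀ (y : V) (c' : G.Walk y y), c'.IsCycle → c.length ≤ c'.length)
    (hlen : 5 ≤ c.length) :
    (∃ v : V, v ∉ c.support) ∧
    (∀ v : V, v ∉ c.support →
      2 ≤ ((G.neighborFinset v).filter fun w => w ∉ c.support).card) ∧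
    (∃ (y : V) (c' : (G.deleteSet {v | v ∈ c.support}).Walk y y), c'.IsCycle) := by
  classical
  -- Part 1: some vertex is not on the cycle
  have h1 : ∃ v : V, v ∉ c.support := by
    by_contra hall
    push_neg at hall
    -- x has a neighbour b which is neither the successor nor the predecessor on c
    have hcard3 : (G.neighborFinset x).card = 3 := by
      rw [G.card_neighborFinset_eq_degree]; exact hcubic x
    have hsub : 1 ≤ ((G.neighborFinset x) \ {c.getVert 1, c.reverse.getVert 1}).card := by
      have h2 : ({c.getVert 1, c.reverse.getVert 1} : Finset V).card ≤ 2 :=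
        Finset.card_insert_le _ _ |>.trans (by simp)
      have := Finset.le_card_sdiff ({c.getVert 1, c.reverse.getVert 1} : Finset V)
        (G.neighborFinset x)
      omega
    obtain ⟨b, hbmem⟩ := Finset.card_pos.mp hsub
    rw [Finset.mem_sdiff] at hbmem
    obtain ⟨hbnbr, hbne⟩ := hbmem
    rw [SimpleGraph.mem_neighborFinset] at hbnbr
    have hbne1 : b ≠ c.getVert 1 := fun h => hbne (by simp [h])
    have hbne2 : b ≠ c.reverse.getVert 1 := fun h => hbne (by simp [h])
    have hbx : b ≠ x := hbnbr.ne'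
    have hb : b ∈ c.support := hall b
    obtain ⟨hptake, hpdrop⟩ := cycle_takeUntil_isPath c hc hb hbx
    set p := c.takeUntil b hb with hpdef
    set q := c.dropUntil b hb with hqdef
    have hspec : p.append q = c := c.take_spec hb
    have hsum : p.length + q.length = c.length := by
      rw [← Walk.length_append, hspec]
    have hp0 : p.length ≠ 0 := fun h =>
      hbx (Walk.eq_of_length_eq_zero h).symm
    have hq0 : q.length ≠ 0 := fun h =>
      hbx (Walk.eq_of_length_eq_zero h)
    -- q cannot have length 1, else b is the predecessor of x on c
    have hq1 : q.length ≠ 1 := by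
      intro h1q
      apply hbne2
      have hrev : c.reverse = q.reverse.append p.reverse := by
        rw [← hspec, Walk.reverse_append]
      rw [hrev, getVert_one_append _ _ (by rw [Walk.length_reverse]; omega)]
      have : q.reverse.getVert q.reverse.length = b := Walk.getVert_length _
      rw [Walk.length_reverse, h1q] at this
      exact this.symm
    -- the cycle through the chord
    have hcyc : (Walk.cons hbnbr.symm p).IsCycle := by
      rw [Walk.cons_isCycle_iff]
      refine ⟨hptake, ?_⟩
      intro hmem
      rw [show s(b, x) = s(x, b) from Sym2.eq_swap] at hmem
      have := path_start_edge p hptake hmem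
      apply hbne1
      rw [this, ← hspec, getVert_one_append _ _ hp0]
    have := hshort b _ hcyc
    rw [Walk.length_cons] at this
    omega
  -- Part 2: every vertex off the cycle has ≥ 2 neighbours off the cycle
  have h2 : ∀ v : V, v ∉ c.support →
      2 ≤ ((G.neighborFinset v).filter fun w => w ∉ c.support).card := by
    intro v hv
    have hcard3 : (G.neighborFinset v).card = 3 := by
      rw [G.card_neighborFinset_eq_degree]; exact hcubic v
    have hsplit := Finset.card_filter_add_card_filter_not
      (s := G.neighborFinset v) (p := fun w => w ∉ c.support)
    have hone : ((G.neighborFinset v).filter fun w => ¬ w ∉ c.support).card ≤ 1 := by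
      rw [Finset.card_le_one]
      intro a hamem b hbmem
      rw [Finset.mem_filter, SimpleGraph.mem_neighborFinset, not_not] at hamem hbmem
      by_contra hab
      exact no_two_nbrs c hc hshort hlen hv hamem.1 hbmem.1 hab hamem.2 hbmem.2
    omega
  refine ⟨h1, h2, ?_⟩
  -- Part 3: G - V(C) contains a cycle
  set A : Set V := {v | v ∈ c.support} with hA
  set G' := G.deleteSet A with hG'
  have hG'adj : ∀ a b : V, G'.Adj a b ↔ G.Adj a b ∧ a ∉ c.support ∧ b ∉ c.support := by
    intro a b; rfl
  set P : ℕ → Prop := fun n => ∃ (u w : V) (p : G'.Walk u w), p.IsPath ∧ p.length = n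
    with hP
  have hP1 : P 1 := by
    obtain ⟨v₀, hv₀⟩ := h1
    have := h2 v₀ hv₀
    have hpos : 0 < ((G.neighborFinset v₀).filter fun w => w ∉ c.support).card := by omega
    obtain ⟨w₀, hw₀⟩ := Finset.card_pos.mp hpos
    rw [Finset.mem_filter, SimpleGraph.mem_neighborFinset] at hw₀
    have hadj : G'.Adj v₀ w₀ := (hG'adj v₀ w₀).mpr ⟨hw₀.1, hv₀, hw₀.2⟩
    exact ⟨v₀, w₀, Walk.cons hadj Walk.nil, by
      rw [Walk.cons_isPath_iff]
      exact ⟨Walk.IsPath.nil, by simpa using hadj.ne⟩, rfl⟩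
  set N := Nat.findGreatest P (Fintype.card V) with hN
  have h1le : (1 : ℕ) ≤ Fintype.card V := by omega
  have hNge1 : 1 ≤ N := Nat.le_findGreatest h1le hP1
  have hPN : P N := Nat.findGreatest_spec h1le hP1
  obtain ⟨u, w, p, hp, hplen⟩ := hPN
  have hp0 : p.length ≠ 0 := by omega
  have hwA : w ∉ A := deleteSet_end_not_mem p hp0
  have hwsupp : w ∉ c.support := hwA
  -- pick a neighbour x' of w off the cycle, different from the penultimate vertex
  have h2w := h2 w hwsupp
  have hsub : 1 ≤ (((G.neighborFinset w).filter fun z => z ∉ c.support)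
      \ {p.reverse.getVert 1}).card := by
    have := Finset.le_card_sdiff ({p.reverse.getVert 1} : Finset V)
      ((G.neighborFinset w).filter fun z => z ∉ c.support)
    simp only [Finset.card_singleton] at this
    omega
  obtain ⟨x', hx'⟩ := Finset.card_pos.mp hsub
  rw [Finset.mem_sdiff, Finset.mem_filter, SimpleGraph.mem_neighborFinset,
    Finset.mem_singleton] at hx'
  obtain ⟨⟨hadjwx, hx'supp⟩, hx'ne⟩ := hx'
  have hadj' : G'.Adj w x' := (hG'adj w x').mpr ⟨hadjwx, hwsupp, hx'supp⟩
  by_cases hxs : x' ∈ p.support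
  · -- close up the cycle
    set q := p.dropUntil x' hxs with hq
    have hqpath : q.IsPath := hp.dropUntil hxs
    refine ⟨w, Walk.cons hadj' q, ?_⟩
    rw [Walk.cons_isCycle_iff]
    refine ⟨hqpath, ?_⟩
    intro hmem
    have hmemp : s(w, x') ∈ p.edges := p.edges_dropUntil_subset hxs hmem
    have hmemrev : s(w, x') ∈ p.reverse.edges := by
      rw [Walk.edges_reverse, List.mem_reverse]; exact hmemp
    exact hx'ne (path_start_edge p.reverse hp.reverse hmemrev)
  · -- extend the maximal path: contradiction
    exfalso
    have hext : (p.concat hadj').IsPath := concat_isPath hp hadj' hxs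
    have hlt : (p.concat hadj').length < Fintype.card V := hext.length_lt
    rw [Walk.length_concat, hplen] at hlt
    have : N + 1 ≤ N := Nat.le_findGreatest (by omega)
      ⟨u, x', p.concat hadj', hext, by rw [Walk.length_concat, hplen]⟩
    omega
end
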